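/- arXiv:2211.10935 — 9 statements merged into one kernel-verified Lean document; each statement's English description precedes it below -/
import Mathlib

section
/- Let G be a finite graph with a perfect matching M, and let C be an M-alternating cycle of length 4. Then the forcing numbers of M and of M ⊕ E(C) differ by at most 1, i.e. |f(G, M ⊕ E(C)) − f(G, M)| ≤ 1. -/
open SimpleGraph

variable {V : Type*}

/-- `M` is a perfect matching of `G`, given as a set of edges: every vertex is
incident with exactly one edge of `M`. -/
def IsPM (G : SimpleGraph V) (M : Set (Sym2 V)) : Prop :=
  M ⊆ G.edgeSet ∧ ∀ v : V, ∃! e, e ∈ M ∧ v ∈ e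

/-- The set of endpoints of a set of edges. -/
def edgeVerts (C : Set (Sym2 V)) : Set V := {v | ∃ e ∈ C, v ∈ e}

/-- `C` is the edge set of a cycle of `G`: nonempty, every vertex it covers lies on
exactly two of its edges, and it is connected. -/
def IsCycleSet (G : SimpleGraph V) (C : Set (Sym2 V)) : Prop :=
  C ⊆ G.edgeSet ∧ C.Nonempty ∧
    (∀ v ∈ edgeVerts C, {e | e ∈ C ∧ v ∈ e}.ncard = 2) ∧
    ((SimpleGraph.fromEdgeSet C).induce (edgeVerts C)).Connected

/-- `C` is an `M`-alternating cycle: a cycle whose edges lie alternately in the matching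
`M` and outside of it; for a matching this is equivalent to every vertex of `C` being
covered by an edge of `C ∩ M`. -/
def IsAltCycle (G : SimpleGraph V) (M C : Set (Sym2 V)) : Prop :=
  IsCycleSet G C ∧ ∀ v ∈ edgeVerts C, ∃ e ∈ C ∩ M, v ∈ e

/-- `S` is a forcing set of the perfect matching `M`: `S ⊆ M` and `M` is the unique
perfect matching of `G` containing `S`. -/
def IsForcingSet (G : SimpleGraph V) (M S : Set (Sym2 V)) : Prop :=
  S ⊆ M ∧ ∀ M' : Set (Sym2 V), IsPM G M' → S ⊆ M' → M' = M

/-- The forcing number `f(G,M)`: the minimum size of a forcing set of `M`. -/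
noncomputable def forcingNumber (G : SimpleGraph V) (M : Set (Sym2 V)) : ℕ :=
  sInf {n | ∃ S : Set (Sym2 V), IsForcingSet G M S ∧ S.ncard = n}

lemma sym2_exists_mem (e : Sym2 V) : ∃ v, v ∈ e := by
  induction e using Sym2.ind with | _ x y => exact ⟨x, by simp⟩

lemma mem_edge_form {G : SimpleGraph V} {e : Sym2 V} {v : V}
    (he : e ∈ G.edgeSet) (hv : v ∈ e) : ∃ u, u ≠ v ∧ e = s(v, u) := by
  induction e using Sym2.ind with
  | _ x y =>
    rw [SimpleGraph.mem_edgeSet] at he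
    rw [Sym2.mem_iff] at hv
    rcases hv with rfl | rfl
    · exact ⟨y, he.ne', rfl⟩
    · exact ⟨x, he.ne, Sym2.eq_swap⟩

lemma pm_unique {G : SimpleGraph V} {M : Set (Sym2 V)} (hM : IsPM G M) {v : V} {e f : Sym2 V}
    (he : e ∈ M) (hve : v ∈ e) (hf : f ∈ M) (hvf : v ∈ f) : e = f := by
  obtain ⟨g, -, hu⟩ := hM.2 v
  rw [hu e ⟨he, hve⟩, hu f ⟨hf, hvf⟩]

lemma other_edge [Fintype V] {C : Set (Sym2 V)}
    (h2 : ∀ v ∈ edgeVerts C, {e | e ∈ C ∧ v ∈ e}.ncard = 2) {v : V} {e1 : Sym2 V}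
    (hv : v ∈ edgeVerts C) (he1 : e1 ∈ C) (hve1 : v ∈ e1) :
    ∃ e2, e2 ∈ C ∧ v ∈ e2 ∧ e2 ≠ e1 := by
  have h := h2 v hv
  have h1 : 1 < {e | e ∈ C ∧ v ∈ e}.ncard := by omega
  obtain ⟨b, hb, hne⟩ := Set.exists_ne_of_one_lt_ncard h1 e1
  exact ⟨b, hb.1, hb.2, hne⟩

lemma edges_at [Fintype V] {C : Set (Sym2 V)}
    (h2 : ∀ v ∈ edgeVerts C, {e | e ∈ C ∧ v ∈ e}.ncard = 2)
    {v : V} (hv : v ∈ edgeVerts C) {e1 e2 : Sym2 V}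
    (he1 : e1 ∈ C) (hve1 : v ∈ e1) (he2 : e2 ∈ C) (hve2 : v ∈ e2) (hne : e1 ≠ e2)
    {f : Sym2 V} (hf : f ∈ C) (hvf : v ∈ f) : f = e1 ∨ f = e2 := by
  have hsub : ({e1, e2} : Set (Sym2 V)) ⊆ {e | e ∈ C ∧ v ∈ e} := by
    rintro x (rfl | rfl)
    exacts [⟨he1, hve1⟩, ⟨he2, hve2⟩]
  have heq : ({e1, e2} : Set (Sym2 V)) = {e | e ∈ C ∧ v ∈ e} :=
    Set.eq_of_subset_of_ncard_le hsub (by rw [h2 v hv, Set.ncard_pair hne]) (Set.toFinite _)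
  have : f ∈ ({e1, e2} : Set (Sym2 V)) := heq ▸ (⟨hf, hvf⟩ : f ∈ {e | e ∈ C ∧ v ∈ e})
  simpa using this

lemma flip_pm [Fintype V] {G : SimpleGraph V} {N C : Set (Sym2 V)}
    (hN : IsPM G N) (hCG : C ⊆ G.edgeSet)
    (h2 : ∀ v ∈ edgeVerts C, {e | e ∈ C ∧ v ∈ e}.ncard = 2)
    (hcov : ∀ v ∈ edgeVerts C, ∃ e ∈ C ∩ N, v ∈ e) :
    IsPM G (symmDiff N C) := by
  constructor
  · intro e he
    rw [Set.mem_symmDiff] at he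
    rcases he with ⟨h, -⟩ | ⟨h, -⟩
    exacts [hN.1 h, hCG h]
  · intro v
    by_cases hv : v ∈ edgeVerts C
    · obtain ⟨e1, ⟨he1C, he1N⟩, hve1⟩ := hcov v hv
      obtain ⟨e2, he2C, hve2, hne⟩ := other_edge h2 hv he1C hve1
      have he2N : e2 ∉ N := fun h => hne (pm_unique hN h hve2 he1N hve1)
      refine ⟨e2, ⟨Set.mem_symmDiff.2 (Or.inr ⟨he2C, he2N⟩), hve2⟩, ?_⟩
      rintro f ⟨hf, hvf⟩
      rw [Set.mem_symmDiff] at hf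
      rcases hf with ⟨hfN, hfC⟩ | ⟨hfC, hfN⟩
      · exact absurd (pm_unique hN hfN hvf he1N hve1 ▸ he1C) hfC
      · rcases edges_at h2 hv he1C hve1 he2C hve2 (Ne.symm hne) hfC hvf with rfl | rfl
        · exact absurd he1N hfN
        · rfl
    · obtain ⟨e, ⟨heN, hve⟩, hu⟩ := hN.2 v
      have heC : e ∉ C := fun h => hv ⟨e, h, hve⟩
      refine ⟨e, ⟨Set.mem_symmDiff.2 (Or.inl ⟨heN, heC⟩), hve⟩, ?_⟩
      rintro f ⟨hf, hvf⟩
      rw [Set.mem_symmDiff] at hf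
      rcases hf with ⟨hfN, -⟩ | ⟨hfC, -⟩
      · exact hu f ⟨hfN, hvf⟩
      · exact absurd ⟨f, hfC, hvf⟩ hv

lemma pm_forces_self {G : SimpleGraph V} {M : Set (Sym2 V)} (hM : IsPM G M) :
    IsForcingSet G M M := by
  refine ⟨subset_rfl, fun N hN hMN => ?_⟩
  apply Set.Subset.antisymm _ hMN
  intro e heN
  obtain ⟨v, hv⟩ := sym2_exists_mem e
  obtain ⟨f, ⟨hfM, hvf⟩, -⟩ := hM.2 v
  have heq := pm_unique hN heN hv (hMN hfM) hvf
  exact heq ▸ hfM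

lemma exists_min_forcing [Fintype V] {G : SimpleGraph V} {M : Set (Sym2 V)} (hM : IsPM G M) :
    ∃ S, IsForcingSet G M S ∧ S.ncard = forcingNumber G M := by
  have hne : {n | ∃ S : Set (Sym2 V), IsForcingSet G M S ∧ S.ncard = n}.Nonempty :=
    ⟨M.ncard, M, pm_forces_self hM, rfl⟩
  exact Nat.sInf_mem hne

lemma key [Fintype V] (G : SimpleGraph V) (M C : Set (Sym2 V))
    (hM : IsPM G M) (hCG : C ⊆ G.edgeSet)
    (h2 : ∀ v ∈ edgeVerts C, {e | e ∈ C ∧ v ∈ e}.ncard = 2)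
    (hcov : ∀ v ∈ edgeVerts C, ∃ e ∈ C ∩ M, v ∈ e)
    (h4 : C.ncard = 4) :
    forcingNumber G (symmDiff M C) ≤ forcingNumber G M + 1 := by
  obtain ⟨e0, he0⟩ : C.Nonempty := Set.nonempty_of_ncard_ne_zero (by omega)
  obtain ⟨v0, hv0⟩ := sym2_exists_mem e0
  have hv0C : v0 ∈ edgeVerts C := ⟨e0, he0, hv0⟩
  obtain ⟨e1, ⟨he1C, he1M⟩, hve1⟩ := hcov v0 hv0C
  obtain ⟨e2, he2C, hve2, hne21⟩ := other_edge h2 hv0C he1C hve1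
  have he2M : e2 ∉ M := fun h => hne21 (pm_unique hM h hve2 he1M hve1)
  -- |C ∩ M| ≥ 2
  obtain ⟨w, hw, he1eq⟩ := mem_edge_form (hCG he1C) hve1
  obtain ⟨u, hu, he2eq⟩ := mem_edge_form (hCG he2C) hve2
  have hue2 : u ∈ e2 := by rw [he2eq]; simp
  have huw : u ∉ e1 := by
    rw [he1eq, Sym2.mem_iff]
    rintro (rfl | rfl)
    · exact hu rfl
    · exact hne21 (by rw [he2eq, he1eq])
  have huC : u ∈ edgeVerts C := ⟨e2, he2C, hue2⟩
  obtain ⟨e3, ⟨he3C, he3M⟩, hue3⟩ := hcov u huC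
  have hne31 : e3 ≠ e1 := fun h => huw (h ▸ hue3)
  have hCM2 : 2 ≤ (C ∩ M).ncard := by
    have hsub : ({e1, e3} : Set (Sym2 V)) ⊆ C ∩ M := by
      rintro x (rfl | rfl)
      exacts [⟨he1C, he1M⟩, ⟨he3C, he3M⟩]
    calc 2 = ({e1, e3} : Set (Sym2 V)).ncard := (Set.ncard_pair (Ne.symm hne31)).symm
      _ ≤ (C ∩ M).ncard := Set.ncard_le_ncard hsub (Set.toFinite _)
  have hdiff2 : (C \ M).ncard ≤ 2 := by
    have h := Set.ncard_inter_add_ncard_diff_eq_ncard C M (Set.toFinite _)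
    omega
  obtain ⟨S, hS, hScard⟩ := exists_min_forcing hM
  -- S meets C
  have hSC : (S ∩ C).Nonempty := by
    by_contra h
    rw [Set.not_nonempty_iff_eq_empty] at h
    have hPM' : IsPM G (symmDiff M C) := flip_pm hM hCG h2 hcov
    have hsub : S ⊆ symmDiff M C := by
      intro e he
      have heC : e ∉ C := fun hc => (Set.eq_empty_iff_forall_notMem.1 h e ⟨he, hc⟩)
      exact Set.mem_symmDiff.2 (Or.inl ⟨hS.1 he, heC⟩)
    have heqM := hS.2 _ hPM' hsub
    have : e2 ∈ M := by
      rw [← heqM]; exact Set.mem_symmDiff.2 (Or.inr ⟨he2C, he2M⟩)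
    exact he2M this
  set S' := (S \ C) ∪ (C \ M) with hS'def
  have hforce : IsForcingSet G (symmDiff M C) S' := by
    constructor
    · rintro e (⟨heS, heC⟩ | ⟨heC, heM⟩)
      · exact Set.mem_symmDiff.2 (Or.inl ⟨hS.1 heS, heC⟩)
      · exact Set.mem_symmDiff.2 (Or.inr ⟨heC, heM⟩)
    · intro N hN hsub
      have hcovN : ∀ v ∈ edgeVerts C, ∃ e ∈ C ∩ N, v ∈ e := by
        intro v hv
        obtain ⟨f1, ⟨hf1C, hf1M⟩, hvf1⟩ := hcov v hv
        obtain ⟨f2, hf2C, hvf2, hnef⟩ := other_edge h2 hv hf1C hvf1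
        have hf2M : f2 ∉ M := fun h => hnef (pm_unique hM h hvf2 hf1M hvf1)
        exact ⟨f2, ⟨hf2C, hsub (Set.mem_union_right _ ⟨hf2C, hf2M⟩)⟩, hvf2⟩
      have hflip : IsPM G (symmDiff N C) := flip_pm hN hCG h2 hcovN
      have hSsub : S ⊆ symmDiff N C := by
        intro e he
        by_cases heC : e ∈ C
        · have heM := hS.1 he
          have heN : e ∉ N := by
            intro heN
            obtain ⟨v, hv⟩ := sym2_exists_mem e
            have hvC : v ∈ edgeVerts C := ⟨e, heC, hv⟩
            obtain ⟨g, hgC, hvg, hge⟩ := other_edge h2 hvC heC hv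
            have hgM : g ∉ M := fun h => hge (pm_unique hM h hvg heM hv)
            have hgN : g ∈ N := hsub (Set.mem_union_right _ ⟨hgC, hgM⟩)
            exact hge (pm_unique hN hgN hvg heN hv)
          exact Set.mem_symmDiff.2 (Or.inr ⟨heC, heN⟩)
        · have heN : e ∈ N := hsub (Set.mem_union_left _ ⟨he, heC⟩)
          exact Set.mem_symmDiff.2 (Or.inl ⟨heN, heC⟩)
      have hNC : symmDiff N C = M := hS.2 _ hflip hSsub
      calc N = symmDiff (symmDiff N C) C := (symmDiff_symmDiff_cancel_right C N).symm
        _ = symmDiff M C := by rw [hNC]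
  have hlt : (S \ C).ncard < S.ncard := by
    refine Set.ncard_lt_ncard ?_ (Set.toFinite _)
    obtain ⟨e, heS, heC⟩ := hSC
    exact ⟨Set.diff_subset, fun h => (h heS).2 heC⟩
  have hcard : S'.ncard ≤ S.ncard + 1 := by
    have h := Set.ncard_union_le (S \ C) (C \ M)
    rw [← hS'def] at h
    omega
  have hle : forcingNumber G (symmDiff M C) ≤ S'.ncard :=
    Nat.sInf_le ⟨S', hforce, rfl⟩
  omega

/-- a flip along an alternating 4-cycle changes the forcing number
by at most one. -/
theorem stmt_2 {V : Type*} [Fintype V] (G : SimpleGraph V) (M C : Set (Sym2 V))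
    (hM : IsPM G M) (hC : IsAltCycle G M C) (h4 : C.ncard = 4) :
    |(forcingNumber G (symmDiff M C) : ℤ) - (forcingNumber G M : ℤ)| ≤ 1 := by
  obtain ⟨hCyc, hcov⟩ := hC
  obtain ⟨hCG, hCne, h2, -⟩ := hCyc
  have h1 : forcingNumber G (symmDiff M C) ≤ forcingNumber G M + 1 :=
    key G M C hM hCG h2 hcov h4
  have hM' : IsPM G (symmDiff M C) := flip_pm hM hCG h2 hcov
  have hcov' : ∀ v ∈ edgeVerts C, ∃ e ∈ C ∩ symmDiff M C, v ∈ e := by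
    intro v hv
    obtain ⟨f1, ⟨hf1C, hf1M⟩, hvf1⟩ := hcov v hv
    obtain ⟨f2, hf2C, hvf2, hnef⟩ := other_edge h2 hv hf1C hvf1
    have hf2M : f2 ∉ M := fun h => hnef (pm_unique hM h hvf2 hf1M hvf1)
    exact ⟨f2, ⟨hf2C, Set.mem_symmDiff.2 (Or.inr ⟨hf2C, hf2M⟩)⟩, hvf2⟩
  have h2' := key G (symmDiff M C) C hM' hCG h2 hcov' h4
  rw [symmDiff_symmDiff_cancel_right] at h2'
  rw [abs_le]
  constructor <;> [skip; skip] <;> omega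
end

section
/- Let G be a finite graph with a perfect matching M, and suppose G is the vertex-disjoint union of subgraphs G¹, ..., Gᵏ such that Mⁱ := M ∩ E(Gⁱ) is a perfect matching of Gⁱ for each i (though G may have additional edges between the Gⁱ). Then f(G, M) ≥ Σᵢ f(Gⁱ, Mⁱ). -/
open SimpleGraph

variable {V : Type*}

/-!
Fix a minimum forcing set `S` of `M`. Since `Mⁱ` is a perfect matching of `Gⁱ`, no edge of `M`
leaves `V(Gⁱ)`, so any perfect matching `N` of `Gⁱ` can be swapped in for `Mⁱ`, giving a perfect
matching of `G`. If `N` contains `S ∩ E(Gⁱ)`, the swapped matching contains `S`, hence equals `M`,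
so `N = Mⁱ`: the sets `S ∩ E(Gⁱ)` force the `Mⁱ`. They are disjoint subsets of `S`, whence
`∑ᵢ f(Gⁱ, Mⁱ) ≤ ∑ᵢ |S ∩ E(Gⁱ)| ≤ |S| = f(G, M)`.
-/

lemma mem_of_mem_map_val {P : Set V} {e : Sym2 P} {v : V} (h : v ∈ Sym2.map Subtype.val e) :
    v ∈ P := by
  obtain ⟨u, -, rfl⟩ := Sym2.mem_map.mp h
  exact u.2

lemma mem_map_val_iff {P : Set V} {e : Sym2 P} {v : P} :
    (v : V) ∈ Sym2.map Subtype.val e ↔ v ∈ e :=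
  Sym2.mem_map.trans ⟨fun ⟨_, hu, huv⟩ => Subtype.ext huv ▸ hu, fun hv => ⟨v, hv, rfl⟩⟩

def replaceOn (P : Set V) (M : Set (Sym2 V)) (N : Set (Sym2 P)) : Set (Sym2 V) :=
  Sym2.map Subtype.val '' N ∪ (M \ Set.range (Sym2.map (Subtype.val : P → V)))

lemma preimage_replaceOn (P : Set V) (M : Set (Sym2 V)) (N : Set (Sym2 P)) :
    Sym2.map Subtype.val ⁻¹' replaceOn P M N = N := by
  ext e
  simp [replaceOn, (Sym2.map.injective Subtype.val_injective).mem_set_image]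

lemma subset_replaceOn {P : Set V} {M S : Set (Sym2 V)} {N : Set (Sym2 P)} (hSM : S ⊆ M)
    (hSN : Sym2.map Subtype.val ⁻¹' S ⊆ N) : S ⊆ replaceOn P M N := by
  intro e he
  by_cases hr : e ∈ Set.range (Sym2.map (Subtype.val : P → V))
  · obtain ⟨e', rfl⟩ := hr
    exact Or.inl ⟨e', hSN he, rfl⟩
  · exact Or.inr ⟨hSM he, hr⟩

namespace IsPM

variable {G : SimpleGraph V} {M : Set (Sym2 V)} {P : Set V}

lemma isForcingSet_self (hM : IsPM G M) : IsForcingSet G M M := by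
  refine ⟨subset_rfl, fun M' hM' hsub => (Set.Subset.antisymm (fun e he => ?_) hsub)⟩
  induction e using Sym2.ind with
  | _ a b =>
    obtain ⟨f, ⟨hfM, hfa⟩, -⟩ := hM.2 a
    obtain rfl := (hM'.2 a).unique ⟨he, Sym2.mem_mk_left a b⟩ ⟨hsub hfM, hfa⟩
    exact hfM

lemma exists_isForcingSet_ncard_eq (hM : IsPM G M) :
    ∃ S, IsForcingSet G M S ∧ S.ncard = forcingNumber G M :=
  Nat.sInf_mem (s := {n | ∃ S, IsForcingSet G M S ∧ S.ncard = n})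
    ⟨M.ncard, M, hM.isForcingSet_self, rfl⟩

lemma mem_range_map_val (hM : IsPM G M) (hP : IsPM (G.induce P) (Sym2.map Subtype.val ⁻¹' M))
    {e : Sym2 V} (he : e ∈ M) {v : V} (hve : v ∈ e) (hvP : v ∈ P) :
    e ∈ Set.range (Sym2.map (Subtype.val : P → V)) := by
  obtain ⟨e', ⟨he'M, hve'⟩, -⟩ := hP.2 ⟨v, hvP⟩
  exact ⟨e', (hM.2 v).unique ⟨he'M, mem_map_val_iff.mpr hve'⟩ ⟨he, hve⟩⟩

lemma replaceOn (hM : IsPM G M) (hP : IsPM (G.induce P) (Sym2.map Subtype.val ⁻¹' M))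
    {N : Set (Sym2 P)} (hN : IsPM (G.induce P) N) : IsPM G (replaceOn P M N) := by
  refine ⟨?_, fun v => ?_⟩
  · rintro e (⟨e', he', rfl⟩ | ⟨heM, -⟩)
    · exact (Embedding.induce P).map_mem_edgeSet_iff.mpr (hN.1 he')
    · exact hM.1 heM
  by_cases hvP : v ∈ P
  · obtain ⟨e', ⟨he'N, hve'⟩, huniq⟩ := hN.2 ⟨v, hvP⟩
    refine ⟨_, ⟨Or.inl ⟨e', he'N, rfl⟩, mem_map_val_iff.mpr hve'⟩, ?_⟩
    rintro f ⟨⟨f', hf'N, rfl⟩ | ⟨hfM, hfr⟩, hvf⟩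
    · rw [huniq f' ⟨hf'N, mem_map_val_iff.mp hvf⟩]
    · exact absurd (hM.mem_range_map_val hP hfM hvf hvP) hfr
  · obtain ⟨e, ⟨heM, hve⟩, huniq⟩ := hM.2 v
    have her : e ∉ Set.range (Sym2.map (Subtype.val : P → V)) := by
      rintro ⟨e', rfl⟩
      exact hvP (mem_of_mem_map_val hve)
    refine ⟨e, ⟨Or.inr ⟨heM, her⟩, hve⟩, ?_⟩
    rintro f ⟨⟨f', -, rfl⟩ | ⟨hfM, -⟩, hvf⟩
    · exact absurd (mem_of_mem_map_val hvf) hvP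
    · exact huniq f ⟨hfM, hvf⟩

end IsPM

lemma IsForcingSet.restrict {G : SimpleGraph V} {M S : Set (Sym2 V)} {P : Set V}
    (hM : IsPM G M) (hP : IsPM (G.induce P) (Sym2.map Subtype.val ⁻¹' M))
    (hS : IsForcingSet G M S) :
    IsForcingSet (G.induce P) (Sym2.map Subtype.val ⁻¹' M) (Sym2.map Subtype.val ⁻¹' S) := by
  refine ⟨Set.preimage_mono hS.1, fun N hN hSN => ?_⟩
  have hMN : replaceOn P M N = M := hS.2 _ (hM.replaceOn hP hN) (subset_replaceOn hS.1 hSN)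
  rw [← preimage_replaceOn P M N, hMN]

lemma forcingNumber_le_ncard {G : SimpleGraph V} {M S : Set (Sym2 V)}
    (hS : IsForcingSet G M S) : forcingNumber G M ≤ S.ncard :=
  Nat.sInf_le ⟨S, hS, rfl⟩

lemma disjoint_range_map_val {P Q : Set V} (h : Disjoint P Q) :
    Disjoint (Set.range (Sym2.map (Subtype.val : P → V)))
      (Set.range (Sym2.map (Subtype.val : Q → V))) := by
  rintro E hEP hEQ e he
  obtain ⟨e₁, rfl⟩ := hEP he
  obtain ⟨e₂, he₂⟩ := hEQ he
  induction e₁ using Sym2.ind with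
  | _ a b =>
    have ha : (a : V) ∈ Sym2.map Subtype.val e₂ := he₂ ▸ Sym2.mem_map.mpr ⟨a, by simp, rfl⟩
    exact h.ne_of_mem a.2 (mem_of_mem_map_val ha) rfl

lemma sum_ncard_preimage_map_val_le [Finite V] {ι : Type*} [Fintype ι] {P : ι → Set V}
    (hP : Pairwise fun i j => Disjoint (P i) (P j)) (S : Set (Sym2 V)) :
    ∑ i, (Sym2.map Subtype.val ⁻¹' S : Set (Sym2 (P i))).ncard ≤ S.ncard := by
  let T i : Set (Sym2 V) :=
    Sym2.map Subtype.val '' (Sym2.map Subtype.val ⁻¹' S : Set (Sym2 (P i)))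
  have hT : Pairwise fun i j => Disjoint (T i) (T j) := fun i j hij =>
    (disjoint_range_map_val (hP hij)).mono (Set.image_subset_range _ _)
      (Set.image_subset_range _ _)
  calc ∑ i, (Sym2.map Subtype.val ⁻¹' S : Set (Sym2 (P i))).ncard
      = ∑ i, (T i).ncard := Finset.sum_congr rfl fun i _ =>
        (Set.ncard_image_of_injective _ (Sym2.map.injective Subtype.val_injective)).symm
    _ = (⋃ i, T i).ncard := by
        rw [Set.ncard_iUnion_of_finite (fun i => Set.toFinite (T i)) hT, finsum_eq_sum_of_fintype]
    _ ≤ S.ncard := Set.ncard_le_ncard (Set.iUnion_subset fun i => Set.image_preimage_subset _ _)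

theorem stmt_3_general {V : Type*} [Fintype V] (G : SimpleGraph V) (M : Set (Sym2 V))
    (hM : IsPM G M) (k : ℕ) (P : Fin k → Set V)
    (hdisj : ∀ i j, i ≠ j → Disjoint (P i) (P j))
    (hPM : ∀ i, IsPM (G.induce (P i))
      {e : Sym2 (P i) | Sym2.map Subtype.val e ∈ M}) :
    ∑ i, forcingNumber (G.induce (P i))
        {e : Sym2 (P i) | Sym2.map Subtype.val e ∈ M} ≤ forcingNumber G M := by
  obtain ⟨S, hS, hScard⟩ := hM.exists_isForcingSet_ncard_eq
  calc ∑ i, forcingNumber (G.induce (P i)) {e : Sym2 (P i) | Sym2.map Subtype.val e ∈ M}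
      ≤ ∑ i, (Sym2.map Subtype.val ⁻¹' S : Set (Sym2 (P i))).ncard :=
        Finset.sum_le_sum fun i _ => forcingNumber_le_ncard (hS.restrict hM (hPM i))
    _ ≤ S.ncard := sum_ncard_preimage_map_val_le (fun i j hij => hdisj i j hij) S
    _ = forcingNumber G M := hScard

/-- if the vertex set of `G` is partitioned into classes `P i` such that the
restriction of the perfect matching `M` to each induced subgraph `G[P i]` is a perfect
matching of it, then `f(G,M)` is at least the sum of the forcing numbers of the
restrictions. -/
theorem stmt_3 {V : Type*} [Fintype V] (G : SimpleGraph V) (M : Set (Sym2 V))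
    (hM : IsPM G M) (k : ℕ) (P : Fin k → Set V)
    (hdisj : ∀ i j, i ≠ j → Disjoint (P i) (P j)) (hcover : (⋃ i, P i) = Set.univ)
    (hPM : ∀ i, IsPM (G.induce (P i))
      {e : Sym2 (P i) | Sym2.map Subtype.val e ∈ M}) :
    ∑ i, forcingNumber (G.induce (P i))
        {e : Sym2 (P i) | Sym2.map Subtype.val e ∈ M} ≤ forcingNumber G M :=
  stmt_3_general G M hM k P hdisj hPM
end

section
/- Let G be a finite graph, M a perfect matching of G, and T ⊆ V(G) an independent set of vertices. Let E_T ⊆ M be the set of matching edges having at least one endpoint in T. If the subgraph of G induced by the endpoints of E_T contains no M-alternating cycle, then M \ E_T is a forcing set of M; consequently f(G, M) ≤ |M| − |T|. -/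
open SimpleGraph

variable {V : Type*}

/-- Every vertex reachable in `fromEdgeSet D` from a vertex of `edgeVerts D` lies in
`edgeVerts D`. -/
lemma reach_mem_edgeVerts {D : Set (Sym2 V)} {a b : V}
    (ha : a ∈ edgeVerts D) (w : (SimpleGraph.fromEdgeSet D).Walk a b) : b ∈ edgeVerts D := by
  induction w with
  | nil => exact ha
  | @cons u c b h p ih =>
    refine ih ⟨s(u, c), ?_, Sym2.mem_mk_right u c⟩
    exact ((SimpleGraph.fromEdgeSet_adj _).mp h).1

/-- if `T` is an independent set, `E_T` the set of matching edges meeting `T`,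
and the subgraph induced by the endpoints of `E_T` contains no `M`-alternating cycle,
then `M \ E_T` is a forcing set of `M`; hence `f(G,M) ≤ |M| - |T|`. -/
theorem stmt_4 {V : Type*} [Fintype V] (G : SimpleGraph V) (M : Set (Sym2 V))
    (hM : IsPM G M) (T : Set V) (hT : ∀ v ∈ T, ∀ w ∈ T, ¬ G.Adj v w)
    (E_T : Set (Sym2 V)) (hET : E_T = {e ∈ M | ∃ v ∈ T, v ∈ e})
    (hNoAlt : ¬ ∃ C : Set (Sym2 V), IsAltCycle G M C ∧ edgeVerts C ⊆ edgeVerts E_T) :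
    IsForcingSet G M (M \ E_T) ∧ forcingNumber G M ≤ M.ncard - T.ncard := by
  have hETM : E_T ⊆ M := by rw [hET]; exact fun e he => he.1
  have hForcing : IsForcingSet G M (M \ E_T) := by
    refine ⟨Set.diff_subset, fun M' hM' hsub => ?_⟩
    by_contra hne
    -- the symmetric difference
    set D : Set (Sym2 V) := (M \ M') ∪ (M' \ M) with hD
    have hDG : D ⊆ G.edgeSet := fun e he => by
      rcases he with he | he
      · exact hM.1 he.1
      · exact hM'.1 he.1
    -- edges of M \ M' are in E_T
    have hMM'ET : M \ M' ⊆ E_T := fun e he => by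
      by_contra h
      exact he.2 (hsub ⟨he.1, h⟩)
    -- the two distinct D-edges at each vertex of edgeVerts D
    have key : ∀ v ∈ edgeVerts D, ∃ e e', e ∈ M \ M' ∧ e' ∈ M' \ M ∧ v ∈ e ∧ v ∈ e' ∧
        e ≠ e' ∧ ∀ f ∈ D, v ∈ f → f = e ∨ f = e' := by
      intro v hv
      obtain ⟨f, hf, hvf⟩ := hv
      obtain ⟨e, ⟨heM, hve⟩, hMuniq⟩ := hM.2 v
      obtain ⟨e', ⟨heM', hve'⟩, hM'uniq⟩ := hM'.2 v
      have hee' : e ≠ e' := by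
        rcases hf with hf | hf
        · have : f = e := hMuniq f ⟨hf.1, hvf⟩
          subst this
          exact fun h => hf.2 (h ▸ heM')
        · have : f = e' := hM'uniq f ⟨hf.1, hvf⟩
          subst this
          exact fun h => hf.2 (h ▸ heM)
      refine ⟨e, e', ⟨heM, fun h => hee' (hM'uniq e ⟨h, hve⟩)⟩,
        ⟨heM', fun h => hee' ((hMuniq e' ⟨h, hve'⟩).symm)⟩, hve, hve', hee', ?_⟩
      intro g hg hvg
      rcases hg with hg | hg
      · exact Or.inl (hMuniq g ⟨hg.1, hvg⟩)
      · exact Or.inr (hM'uniq g ⟨hg.1, hvg⟩)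
    have hDvET : edgeVerts D ⊆ edgeVerts E_T := by
      intro v hv
      obtain ⟨e, _, he, _, hve, _, _, _⟩ := key v hv
      exact ⟨e, hMM'ET he, hve⟩
    -- pick a starting vertex
    have hDne : D.Nonempty := by
      rw [Set.nonempty_iff_ne_empty]
      intro h
      have h1 : M \ M' = ∅ := by
        rw [Set.eq_empty_iff_forall_notMem]
        intro e he; exact (Set.eq_empty_iff_forall_notMem.mp h) e (Or.inl he)
      have h2 : M' \ M = ∅ := by
        rw [Set.eq_empty_iff_forall_notMem]
        intro e he; exact (Set.eq_empty_iff_forall_notMem.mp h) e (Or.inr he)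
      exact hne (Set.Subset.antisymm (Set.diff_eq_empty.mp h2) (Set.diff_eq_empty.mp h1))
    obtain ⟨f₀, hf₀⟩ := hDne
    have hv₀f : f₀.out.1 ∈ f₀ := Sym2.out_fst_mem f₀
    set v₀ : V := f₀.out.1 with hv₀def
    have hv₀ : v₀ ∈ edgeVerts D := ⟨f₀, hf₀, hv₀f⟩
    set H : SimpleGraph V := SimpleGraph.fromEdgeSet D with hH
    -- any edge of D whose one endpoint is reachable has both endpoints reachable
    have hDadj : ∀ e ∈ D, ∀ a ∈ e, ∀ b ∈ e, a ≠ b → H.Adj a b := by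
      intro e he a ha b hb hab
      have : e = s(a, b) := (Sym2.mem_and_mem_iff hab).mp ⟨ha, hb⟩
      exact (SimpleGraph.fromEdgeSet_adj _).mpr ⟨this ▸ he, hab⟩
    -- the connected component of v₀
    set C : Set (Sym2 V) := {e ∈ D | ∃ v ∈ e, H.Reachable v₀ v} with hC
    have hCD : C ⊆ D := fun e he => he.1
    -- every endpoint of an edge of C is reachable from v₀
    have hCreach : ∀ e ∈ C, ∀ v ∈ e, H.Reachable v₀ v := by
      rintro e ⟨heD, w, hwe, hw⟩ v hve
      by_cases hvw : v = w
      · exact hvw ▸ hw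
      · exact hw.trans (hDadj e heD w hwe v hve (Ne.symm hvw)).reachable
    -- edgeVerts C is exactly the set of vertices reachable from v₀
    have hvC : ∀ v, v ∈ edgeVerts C ↔ H.Reachable v₀ v := by
      intro v
      constructor
      · rintro ⟨e, he, hve⟩; exact hCreach e he v hve
      · intro hr
        have hvD : v ∈ edgeVerts D := by
          obtain ⟨w⟩ := hr
          exact reach_mem_edgeVerts hv₀ w
        obtain ⟨e, _, he, _, hve, _, _, _⟩ := key v hvD
        exact ⟨e, ⟨Or.inl he, v, hve, hr⟩, hve⟩
    -- C is an alternating cycle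
    have hAlt : IsAltCycle G M C := by
      constructor
      constructor
      · exact fun e he => hDG (hCD he)
      refine ⟨⟨f₀, ⟨hf₀, v₀, hv₀f, SimpleGraph.Reachable.refl _⟩⟩, ?_, ?_⟩
      · -- degree two
        intro v hv
        have hr := (hvC v).mp hv
        have hvD : v ∈ edgeVerts D := by
          obtain ⟨e, he, hve⟩ := hv; exact ⟨e, hCD he, hve⟩
        obtain ⟨e, e', he, he', hve, hve', hee', huniq⟩ := key v hvD
        have : {f | f ∈ C ∧ v ∈ f} = {e, e'} := by
          ext f
          constructor
          · rintro ⟨hf, hvf⟩; exact huniq f (hCD hf) hvf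
          · rintro (rfl | rfl)
            · exact ⟨⟨Or.inl he, v, hve, hr⟩, hve⟩
            · exact ⟨⟨Or.inr he', v, hve', hr⟩, hve'⟩
        rw [this, Set.ncard_pair hee']
      · -- connectivity
        have hne₀ : (edgeVerts C).Nonempty := ⟨v₀, (hvC v₀).mpr (SimpleGraph.Reachable.refl _)⟩
        rw [SimpleGraph.connected_iff]
        refine ⟨?_, ⟨⟨v₀, (hvC v₀).mpr (SimpleGraph.Reachable.refl _)⟩⟩⟩
        -- transfer walks into the induced graph
        have main : ∀ (a b : V) (w : H.Walk a b) (ha : a ∈ edgeVerts C)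
            (hb : b ∈ edgeVerts C),
            ((SimpleGraph.fromEdgeSet C).induce (edgeVerts C)).Reachable ⟨a, ha⟩ ⟨b, hb⟩ := by
          intro a b w
          induction w with
          | nil => intro ha hb; exact SimpleGraph.Reachable.refl _
          | @cons a c b h p ih =>
            intro ha hb
            have hacD : s(a, c) ∈ D := ((SimpleGraph.fromEdgeSet_adj _).mp h).1
            have hac : a ≠ c := h.ne
            have hraa : H.Reachable v₀ a := (hvC a).mp ha
            have hacC : s(a, c) ∈ C := ⟨hacD, a, Sym2.mem_mk_left a c, hraa⟩
            have hcC : c ∈ edgeVerts C := ⟨s(a, c), hacC, Sym2.mem_mk_right a c⟩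
            have hadj : ((SimpleGraph.fromEdgeSet C).induce (edgeVerts C)).Adj ⟨a, ha⟩ ⟨c, hcC⟩ := by
              show (SimpleGraph.fromEdgeSet C).Adj a c
              exact (SimpleGraph.fromEdgeSet_adj _).mpr ⟨hacC, hac⟩
            exact hadj.reachable.trans (ih hcC hb)
        rintro ⟨a, ha⟩ ⟨b, hb⟩
        obtain ⟨w⟩ := ((hvC a).mp ha).symm.trans ((hvC b).mp hb)
        exact main a b w ha hb
      · -- alternating
        intro v hv
        have hvD : v ∈ edgeVerts D := by
          obtain ⟨e, he, hve⟩ := hv; exact ⟨e, hCD he, hve⟩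
        obtain ⟨e, _, he, _, hve, _, _, _⟩ := key v hvD
        exact ⟨e, ⟨⟨Or.inl he, v, hve, (hvC v).mp hv⟩, he.1⟩, hve⟩
    exact hNoAlt ⟨C, hAlt, fun v hv => hDvET ⟨(hv.choose), hCD hv.choose_spec.1, hv.choose_spec.2⟩⟩
  refine ⟨hForcing, ?_⟩
  have h1 : forcingNumber G M ≤ (M \ E_T).ncard :=
    Nat.sInf_le ⟨M \ E_T, hForcing, rfl⟩
  have h2 : (M \ E_T).ncard = M.ncard - E_T.ncard := Set.ncard_diff hETM
  have h3 : T.ncard ≤ E_T.ncard := by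
    classical
    refine Set.ncard_le_ncard_of_injOn (fun v => (hM.2 v).choose) ?_ ?_ (Set.toFinite _)
    · intro v hv
      obtain ⟨he, hve⟩ := (hM.2 v).choose_spec.1
      rw [hET]
      exact ⟨he, v, hv, hve⟩
    · intro v hv w hw hvw
      by_contra hne
      obtain ⟨heM, hveh⟩ := (hM.2 v).choose_spec.1
      obtain ⟨heM', hweh⟩ := (hM.2 w).choose_spec.1
      have hvw' : (hM.2 v).choose = (hM.2 w).choose := hvw
      rw [hvw'] at hveh
      have : (hM.2 w).choose = s(v, w) :=
        (Sym2.mem_and_mem_iff hne).mp ⟨hveh, hweh⟩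
      exact hT v hv w hw (G.mem_edgeSet.mp (this ▸ hM.1 heM'))
  calc forcingNumber G M ≤ M.ncard - E_T.ncard := h2 ▸ h1
    _ ≤ M.ncard - T.ncard := Nat.sub_le_sub_left h3 _
end

section
/- A finite connected bipartite graph G with at least one edge is elementary (i.e., the subgraph formed by its allowed edges is connected and spans G) if and only if G is connected and every edge of G is allowed, where an edge is allowed if it lies in some perfect matching of G. -/
open SimpleGraph

variable {V : Type*}

/-- An edge is allowed if it lies in some perfect matching of `G`. -/
def IsAllowed (G : SimpleGraph V) (e : Sym2 V) : Prop :=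
  e ∈ G.edgeSet ∧ ∃ M : Set (Sym2 V), IsPM G M ∧ e ∈ M


section Aux
open Finset

lemma pm_fun {G : SimpleGraph V} {M : Set (Sym2 V)} (h : IsPM G M) :
    ∃ m : V → V, (∀ v, G.Adj v (m v)) ∧ (∀ v, m (m v) = v) ∧
      (∀ v, s(v, m v) ∈ M) ∧ (∀ e ∈ M, ∀ v ∈ e, e = s(v, m v)) := by
  have hex : ∀ v : V, ∃ w, s(v, w) ∈ M := by
    intro v
    obtain ⟨e, ⟨heM, hve⟩, -⟩ := h.2 v
    induction e with
    | _ x y =>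
      rcases Sym2.mem_iff.1 hve with rfl | rfl
      · exact ⟨y, heM⟩
      · exact ⟨x, by rwa [Sym2.eq_swap]⟩
  choose m hm using hex
  have huniq : ∀ e ∈ M, ∀ v ∈ e, e = s(v, m v) := by
    intro e heM v hve
    obtain ⟨e', -, hu⟩ := h.2 v
    rw [hu e ⟨heM, hve⟩, hu s(v, m v) ⟨hm v, Sym2.mem_mk_left v _⟩]
  have hadj : ∀ v, G.Adj v (m v) := fun v => G.mem_edgeSet.1 (h.1 (hm v))
  have hinv : ∀ v, m (m v) = v := by
    intro v
    have h1 : s(v, m v) = s(m v, m (m v)) :=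
      huniq _ (hm v) (m v) (Sym2.mem_mk_right v (m v))
    rcases Sym2.eq_iff.1 h1 with ⟨h2, _⟩ | ⟨h2, _⟩
    · exact absurd h2 (G.ne_of_adj (hadj v))
    · exact h2.symm
  exact ⟨m, hadj, hinv, hm, huniq⟩

lemma pm_of_fun {G : SimpleGraph V} (m : V → V) (hadj : ∀ v, G.Adj v (m v))
    (hinv : ∀ v, m (m v) = v) : IsPM G {e | ∃ v, e = s(v, m v)} := by
  constructor
  · rintro e ⟨v, rfl⟩; exact hadj v
  · intro v
    refine ⟨s(v, m v), ⟨⟨v, rfl⟩, Sym2.mem_mk_left _ _⟩, ?_⟩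
    rintro e ⟨⟨w, rfl⟩, hv⟩
    rcases Sym2.mem_iff.1 hv with rfl | rfl
    · rfl
    · rw [hinv w]; exact Sym2.eq_swap.symm

lemma walk_closed {H : SimpleGraph V} {W : Set V} (hW : ∀ x y, H.Adj x y → x ∈ W → y ∈ W) :
    ∀ {a b : V}, H.Walk a b → a ∈ W → b ∈ W := by
  intro a b p
  induction p with
  | nil => exact id
  | cons hadj p ih => exact fun ha => ih (hW _ _ hadj ha)

lemma main_key [Fintype V] (G : SimpleGraph V) (c : G.Coloring (Fin 2))
    (hH : (SimpleGraph.fromEdgeSet {e | IsAllowed G e}).Connected)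
    {u v : V} (huv : G.Adj u v) (hcu : c u = 0) :
    ∃ M : Set (Sym2 V), IsPM G M ∧ s(u, v) ∈ M := by
  classical
  -- there is at least one allowed edge, hence a perfect matching M0
  obtain ⟨M0, hM0⟩ : ∃ M0 : Set (Sym2 V), IsPM G M0 := by
    obtain ⟨p⟩ := hH.preconnected u v
    cases p with
    | nil => exact absurd rfl huv.ne
    | cons hadj _ =>
      obtain ⟨⟨-, M0, hM0, -⟩, -⟩ := ((fromEdgeSet_adj _).1 hadj)
      exact ⟨M0, hM0⟩
  obtain ⟨m0, hm0adj, hm0inv, hm0mem, hm0uniq⟩ := pm_fun hM0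
  -- bipartition
  set A : Finset V := Finset.univ.filter (fun x => c x = 0) with hA
  set B : Finset V := Finset.univ.filter (fun x => c x = 1) with hB
  have fin2 : ∀ i : Fin 2, i ≠ 0 → i = 1 := by decide
  have memA : ∀ x : V, x ∈ A ↔ c x = 0 := by intro x; simp [hA]
  have memB : ∀ x : V, x ∈ B ↔ c x = 1 := by intro x; simp [hB]
  have hABdisj : ∀ x : V, x ∈ A → x ∈ B → False := by
    intro x hxA hxB
    rw [memA] at hxA; rw [memB] at hxB
    simp [hxA] at hxB
  have hABcover : ∀ x : V, x ∈ A ∨ x ∈ B := by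
    intro x
    by_cases h : c x = 0
    · exact Or.inl ((memA x).2 h)
    · exact Or.inr ((memB x).2 (fin2 _ h))
  have hadjAB : ∀ x y : V, G.Adj x y → x ∈ A → y ∈ B := by
    intro x y hxy hxA
    rw [memA] at hxA
    exact (memB y).2 (fin2 _ (fun h => c.valid hxy (by rw [hxA, h])))
  have hadjBA : ∀ x y : V, G.Adj x y → x ∈ B → y ∈ A := by
    intro x y hxy hxB
    rcases hABcover y with hy | hy
    · exact hy
    · exact absurd ((memB x).1 hxB) (by
        have := c.valid hxy
        rw [(memB y).1 hy] at this
        exact fun h => this (h.trans rfl) )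
  -- |A| = |B| using the perfect matching m0
  have minj : ∀ m : V → V, (∀ w, m (m w) = w) → Function.Injective m := by
    intro m hinv a b hab
    have := congrArg m hab
    rwa [hinv, hinv] at this
  have cardAB : A.card = B.card := by
    have h1 : A.image m0 ⊆ B := by
      intro y hy
      obtain ⟨x, hx, rfl⟩ := Finset.mem_image.1 hy
      exact hadjAB x (m0 x) (hm0adj x) hx
    have h2 : B.image m0 ⊆ A := by
      intro y hy
      obtain ⟨x, hx, rfl⟩ := Finset.mem_image.1 hy
      exact hadjBA x (m0 x) (hm0adj x) hx
    have c1 : A.card ≤ B.card :=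
      (Finset.card_image_of_injective A (minj m0 hm0inv)).symm.trans_le
        (Finset.card_le_card h1)
    have c2 : B.card ≤ A.card :=
      (Finset.card_image_of_injective B (minj m0 hm0inv)).symm.trans_le
        (Finset.card_le_card h2)
    omega
  -- neighborhood
  set NS : Finset V → Finset V := fun S => S.biUnion (fun a => G.neighborFinset a) with hNS
  have memNS : ∀ (S : Finset V) (y : V), y ∈ NS S ↔ ∃ a ∈ S, G.Adj a y := by
    intro S y; simp [hNS, Finset.mem_biUnion, mem_neighborFinset]
  have hNSB : ∀ S : Finset V, S ⊆ A → NS S ⊆ B := by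
    intro S hS y hy
    obtain ⟨a, ha, hay⟩ := (memNS S y).1 hy
    exact hadjAB a y hay (hS ha)
  -- any PM-function maps S ⊆ A into NS S injectively
  have hPMle : ∀ (m : V → V), (∀ w, G.Adj w (m w)) → (∀ w, m (m w) = w) →
      ∀ S : Finset V, S.card ≤ (NS S).card := by
    intro m hadj hinv S
    have himg : S.image m ⊆ NS S := by
      intro y hy
      obtain ⟨x, hx, rfl⟩ := Finset.mem_image.1 hy
      exact (memNS S (m x)).2 ⟨x, hx, hadj x⟩
    calc S.card = (S.image m).card := (Finset.card_image_of_injective S (minj m hinv)).symm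
    _ ≤ (NS S).card := Finset.card_le_card himg
  -- strict Hall condition
  have strict : ∀ S : Finset V, S ⊆ A → S.Nonempty → S ≠ A → S.card < (NS S).card := by
    intro S hSA hSne hSneq
    rcases lt_or_eq_of_le (hPMle m0 hm0adj hm0inv S) with h | heq
    · exact h
    exfalso
    -- the vertex set of S ∪ NS S is closed under allowed edges
    set W : Set V := (↑S : Set V) ∪ (↑(NS S) : Set V) with hW
    have immage_eq : ∀ (m : V → V), (∀ w, G.Adj w (m w)) → (∀ w, m (m w) = w) →
        S.image m = NS S := by
      intro m hadj hinv
      apply Finset.eq_of_subset_of_card_le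
      · intro y hy
        obtain ⟨x, hx, rfl⟩ := Finset.mem_image.1 hy
        exact (memNS S (m x)).2 ⟨x, hx, hadj x⟩
      · rw [Finset.card_image_of_injective S (minj m hinv)]; omega
    have hclosed : ∀ x y : V, (SimpleGraph.fromEdgeSet {e | IsAllowed G e}).Adj x y →
        x ∈ W → y ∈ W := by
      intro x y hxy hx
      obtain ⟨⟨hGe, M', hM', heM'⟩, hne⟩ := (fromEdgeSet_adj _).1 hxy
      have hGxy : G.Adj x y := G.mem_edgeSet.1 hGe
      rcases hx with hxS | hxN
      · exact Or.inr (by exact_mod_cast (memNS S y).2 ⟨x, hxS, hGxy⟩)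
      · obtain ⟨m', hm'adj, hm'inv, hm'mem, hm'uniq⟩ := pm_fun hM'
        have hxN' : (x : V) ∈ NS S := by exact_mod_cast hxN
        have : x ∈ S.image m' := (immage_eq m' hm'adj hm'inv) ▸ hxN'
        obtain ⟨a, haS, ham'⟩ := Finset.mem_image.1 this
        have hm'x : m' x = y := by
          have h1 : s(x, y) = s(x, m' x) := hm'uniq _ heM' x (Sym2.mem_mk_left x y)
          rcases Sym2.eq_iff.1 h1 with ⟨-, h3⟩ | ⟨-, h3⟩
          · exact h3.symm
          · exact absurd h3.symm hGxy.ne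
        have : m' x = a := by rw [← ham', hm'inv]
        exact Or.inl (by rw [← hm'x, this]; exact_mod_cast haS)
    obtain ⟨a, haS⟩ := hSne
    obtain ⟨b, hbA, hbS⟩ := Finset.exists_of_ssubset (lt_of_le_of_ne hSA hSneq)
    obtain ⟨p⟩ := hH.preconnected a b
    have hbW : b ∈ W := walk_closed hclosed p (Or.inl (by exact_mod_cast haS))
    rcases hbW with hbW | hbW
    · exact hbS (by exact_mod_cast hbW)
    · exact hABdisj b hbA (hNSB S hSA (by exact_mod_cast hbW))
  -- apply Hall's theorem to A.erase u → B.erase v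
  have huA : u ∈ A := (memA u).2 hcu
  have hvB : v ∈ B := hadjAB u v huv huA
  set t : ↥(A.erase u) → Finset V := fun a => (G.neighborFinset a).erase v with ht
  have hall : ∀ s : Finset ↥(A.erase u), s.card ≤ (s.biUnion t).card := by
    intro s
    rcases s.eq_empty_or_nonempty with rfl | hsne
    · simp
    set S : Finset V := s.image Subtype.val with hS
    have hSA : S ⊆ A := by
      intro x hx
      obtain ⟨a, -, rfl⟩ := Finset.mem_image.1 hx
      exact Finset.mem_of_mem_erase a.2
    have hSne : S.Nonempty := hsne.image _
    have hSneq : S ≠ A := by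
      intro h
      have : u ∈ S := h ▸ huA
      obtain ⟨a, -, ha⟩ := Finset.mem_image.1 this
      have h2 := a.2
      rw [ha] at h2
      exact Finset.notMem_erase u A h2
    have hstrict := strict S hSA hSne hSneq
    have hsub : (NS S).erase v ⊆ s.biUnion t := by
      intro y hy
      obtain ⟨a, haS, hay⟩ := (memNS S y).1 (Finset.mem_of_mem_erase hy)
      obtain ⟨a', ha's, rfl⟩ := Finset.mem_image.1 haS
      refine Finset.mem_biUnion.2 ⟨a', ha's, ?_⟩
      exact Finset.mem_erase.2 ⟨Finset.ne_of_mem_erase hy, (mem_neighborFinset _ _ _).2 hay⟩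
    have hcards : s.card = S.card := (Finset.card_image_of_injective s Subtype.val_injective).symm
    have h1 : (NS S).card ≤ ((NS S).erase v).card + 1 := by
      have : NS S ⊆ insert v ((NS S).erase v) := fun y hy => by
        by_cases h : y = v
        · rw [h]; exact Finset.mem_insert_self v _
        · exact Finset.mem_insert_of_mem (Finset.mem_erase.2 ⟨h, hy⟩)
      calc (NS S).card ≤ (insert v ((NS S).erase v)).card := Finset.card_le_card this
      _ ≤ ((NS S).erase v).card + 1 := Finset.card_insert_le _ _
    have h2 : ((NS S).erase v).card ≤ (s.biUnion t).card := Finset.card_le_card hsub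
    omega
  obtain ⟨f, hfinj, hft⟩ := (Finset.all_card_le_biUnion_card_iff_exists_injective t).1 hall
  -- image of f is exactly B.erase v
  have hfB : ∀ a : ↥(A.erase u), f a ∈ B.erase v := by
    intro a
    have := hft a
    rw [ht] at this
    refine Finset.mem_erase.2 ⟨Finset.ne_of_mem_erase this, ?_⟩
    exact hadjAB a (f a) ((mem_neighborFinset _ _ _).1 (Finset.mem_of_mem_erase this))
      (Finset.mem_of_mem_erase a.2)
  have himg : Finset.univ.image f = B.erase v := by
    apply Finset.eq_of_subset_of_card_le
    · intro y hy
      obtain ⟨a, -, rfl⟩ := Finset.mem_image.1 hy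
      exact hfB a
    · rw [Finset.card_image_of_injective _ hfinj, Finset.card_univ, Fintype.card_coe,
        Finset.card_erase_of_mem hvB, Finset.card_erase_of_mem huA, cardAB]
  have hsurj : ∀ y ∈ B.erase v, ∃ a, f a = y := by
    intro y hy
    rw [← himg] at hy
    obtain ⟨a, -, ha⟩ := Finset.mem_image.1 hy
    exact ⟨a, ha⟩
  -- build the perfect matching function g
  set g : V → V := fun x =>
    if x = u then v else if x = v then u else
    if hx : x ∈ A.erase u then f ⟨x, hx⟩ else
    if hb : ∃ a, f a = x then (hb.choose : V) else x with hg
  have hgu : g u = v := by rw [hg]; simp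
  have hgv : g v = u := by
    simp [hg, huv.ne']
  have hgA : ∀ x (hx : x ∈ A.erase u), g x = f ⟨x, hx⟩ := by
    intro x hx
    have hxu : x ≠ u := Finset.ne_of_mem_erase hx
    have hxv : x ≠ v := fun h => hABdisj x (Finset.mem_of_mem_erase hx) (h ▸ hvB)
    rw [hg]
    simp only
    rw [if_neg hxu, if_neg hxv, dif_pos hx]
  have hgB : ∀ x, x ∈ B.erase v → ∃ h : ∃ a, f a = x, g x = (h.choose : V) := by
    intro x hx
    have hxv : x ≠ v := Finset.ne_of_mem_erase hx
    have hxu : x ≠ u := fun h => hABdisj x (h ▸ huA) (Finset.mem_of_mem_erase hx)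
    have hxA : x ∉ A.erase u := fun h =>
      hABdisj x (Finset.mem_of_mem_erase h) (Finset.mem_of_mem_erase hx)
    have hex : ∃ a, f a = x := hsurj x hx
    refine ⟨hex, ?_⟩
    rw [hg]
    simp only
    rw [if_neg hxu, if_neg hxv, dif_neg hxA, dif_pos hex]
  have hgadj : ∀ x, G.Adj x (g x) := by
    intro x
    by_cases hxu : x = u
    · subst hxu; rw [hgu]; exact huv
    by_cases hxv : x = v
    · subst hxv; rw [hgv]; exact huv.symm
    rcases hABcover x with hx | hx
    · have hx' : x ∈ A.erase u := Finset.mem_erase.2 ⟨hxu, hx⟩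
      rw [hgA x hx']
      have := hft ⟨x, hx'⟩
      rw [ht] at this
      exact (mem_neighborFinset _ _ _).1 (Finset.mem_of_mem_erase this)
    · have hx' : x ∈ B.erase v := Finset.mem_erase.2 ⟨hxv, hx⟩
      obtain ⟨hex, hgx⟩ := hgB x hx'
      rw [hgx]
      have := hft hex.choose
      rw [ht, hex.choose_spec] at this
      exact ((mem_neighborFinset _ _ _).1 (Finset.mem_of_mem_erase this)).symm
  have hginv : ∀ x, g (g x) = x := by
    intro x
    by_cases hxu : x = u
    · subst hxu; rw [hgu, hgv]
    by_cases hxv : x = v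
    · subst hxv; rw [hgv, hgu]
    rcases hABcover x with hx | hx
    · have hx' : x ∈ A.erase u := Finset.mem_erase.2 ⟨hxu, hx⟩
      rw [hgA x hx']
      have hfx : f ⟨x, hx'⟩ ∈ B.erase v := hfB ⟨x, hx'⟩
      obtain ⟨hex, hgx⟩ := hgB _ hfx
      rw [hgx]
      have : hex.choose = ⟨x, hx'⟩ := hfinj hex.choose_spec
      rw [this]
    · have hx' : x ∈ B.erase v := Finset.mem_erase.2 ⟨hxv, hx⟩
      obtain ⟨hex, hgx⟩ := hgB x hx'
      rw [hgx]
      rw [hgA _ hex.choose.2]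
      rw [show (⟨(hex.choose : V), hex.choose.2⟩ : ↥(A.erase u)) = hex.choose from Subtype.ext rfl]
      exact hex.choose_spec
  exact ⟨{e | ∃ x, e = s(x, g x)}, pm_of_fun g hgadj hginv, ⟨u, by rw [hgu]⟩⟩

end Aux

/-- a finite connected bipartite graph with an edge is elementary (its allowed
edges form a connected spanning subgraph) iff it is connected and every edge is allowed. -/
theorem stmt_5 {V : Type*} [Fintype V] (G : SimpleGraph V)
    (hbip : G.Colorable 2) (hconn : G.Connected) (hedge : G.edgeSet.Nonempty) :
    (SimpleGraph.fromEdgeSet {e | IsAllowed G e}).Connected ↔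
      (G.Connected ∧ ∀ e ∈ G.edgeSet, IsAllowed G e) := by
  classical
  constructor
  · intro hH
    refine ⟨hconn, ?_⟩
    have hc : G.Coloring (Fin 2) := hbip.some
    have fin2 : ∀ i : Fin 2, i ≠ 0 → i = 1 := by decide
    have fin2' : ∀ i : Fin 2, i ≠ 1 → i = 0 := by decide
    intro e he
    induction e with
    | _ x y =>
      have hxy : G.Adj x y := G.mem_edgeSet.1 he
      by_cases h : hc x = 0
      · obtain ⟨M, hM, hmem⟩ := main_key G hc hH hxy h
        exact ⟨he, M, hM, hmem⟩
      · have hx1 : hc x = 1 := fin2 _ h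
        have hy0 : hc y = 0 := by
          refine fin2' _ (fun h1 => ?_)
          exact hc.valid hxy (hx1.trans h1.symm)
        obtain ⟨M, hM, hmem⟩ := main_key G hc hH hxy.symm hy0
        exact ⟨he, M, hM, by rw [Sym2.eq_swap]; exact hmem⟩
  · rintro ⟨-, hall⟩
    have hset : {e | IsAllowed G e} = G.edgeSet := by
      ext e
      exact ⟨fun h => h.1, fun h => hall e h⟩
    rw [hset, fromEdgeSet_edgeSet]
    exact hconn
end

section
/- Let n ≥ 1 and consider the prism graph over an odd cycle, G = C_{2n+1} □ K₂ (the Cartesian product of the cycle of length 2n+1 with an edge). Let M be the perfect matching of G consisting of all 2n+1 'rung' edges {(v, 0), (v, 1)}. Then the forcing number of M equals n + 1. -/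
open SimpleGraph

variable {V : Type*}

/-- The prism over the odd cycle: `C_{2n+1} □ K₂`. -/
def prism (n : ℕ) : SimpleGraph (ZMod (2*n+1) × Bool) :=
  SimpleGraph.fromRel (fun x y => (x.1 = y.1 ∧ x.2 ≠ y.2) ∨ (x.2 = y.2 ∧ y.1 = x.1 + 1))

/-- The perfect matching consisting of all rung edges `{(v,false),(v,true)}`. -/
def rungs (n : ℕ) : Set (Sym2 (ZMod (2*n+1) × Bool)) :=
  {e | ∃ v : ZMod (2*n+1), e = s((v, false), (v, true))}

namespace Stmt6

abbrev Z (n : ℕ) := ZMod (2*n+1)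

def rg {n : ℕ} (v : Z n) : Sym2 (Z n × Bool) := s((v,false),(v,true))

lemma mem_rg {n : ℕ} {v w : Z n} {b : Bool} : (w,b) ∈ rg v ↔ w = v := by
  cases b <;> simp [rg, Sym2.mem_iff, Prod.ext_iff]

lemma rg_injective {n : ℕ} : Function.Injective (rg (n := n)) := by
  intro a b h
  have : (a, false) ∈ rg b := h ▸ mem_rg.mpr rfl
  exact mem_rg.mp this

lemma rg_mem_edgeSet {n : ℕ} (v : Z n) : rg v ∈ (prism n).edgeSet := by
  rw [rg, SimpleGraph.mem_edgeSet]
  refine (SimpleGraph.fromRel_adj _ _ _).mpr ⟨by simp, Or.inl (Or.inl ⟨rfl, by simp⟩)⟩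

lemma rungs_eq (n : ℕ) : rungs n = Set.range (rg (n := n)) := by
  ext e; simp [rungs, rg, Set.range, eq_comm]

lemma pm_eq {G : SimpleGraph V} {M : Set (Sym2 V)} (h : IsPM G M) {e f : Sym2 V} {x : V}
    (he : e ∈ M) (hf : f ∈ M) (hxe : x ∈ e) (hxf : x ∈ f) : e = f := by
  obtain ⟨g, -, hu⟩ := h.2 x
  rw [hu e ⟨he, hxe⟩, hu f ⟨hf, hxf⟩]

lemma isPM_rungs (n : ℕ) : IsPM (prism n) (rungs n) := by
  constructor
  · rintro e ⟨v, rfl⟩; exact rg_mem_edgeSet v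
  · rintro ⟨v, b⟩
    refine ⟨rg v, ⟨⟨v, rfl⟩, mem_rg.mpr rfl⟩, ?_⟩
    rintro f ⟨⟨w, rfl⟩, hmem⟩
    rw [show s((w,false),(w,true)) = rg w from rfl] at *
    rw [mem_rg.mp hmem]



lemma adj_cases {n : ℕ} {v : Z n} {b : Bool} {w : Z n × Bool} (h : (prism n).Adj (v,b) w) :
    w = (v, !b) ∨ w = (v+1, b) ∨ (w.1 + 1 = v ∧ w.2 = b) := by
  rw [prism, SimpleGraph.fromRel_adj] at h
  obtain ⟨-, h⟩ := h
  obtain ⟨a, c⟩ := w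
  rcases h with (⟨h1, h2⟩ | ⟨h1, h2⟩) | (⟨h1, h2⟩ | ⟨h1, h2⟩) <;> simp_all
  all_goals (cases b <;> cases c <;> simp_all)

def horiz {n : ℕ} (v : Z n) (c : Bool) : Sym2 (Z n × Bool) := s((v,c),(v+1,c))

lemma mem_horiz {n : ℕ} {v w : Z n} {b c : Bool} :
    (w,b) ∈ horiz v c ↔ (w = v ∨ w = v + 1) ∧ b = c := by
  simp [horiz, Sym2.mem_iff, Prod.ext_iff]; tauto

def swapM {n : ℕ} (v : Z n) : Set (Sym2 (Z n × Bool)) :=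
  (rungs n \ {rg v, rg (v+1)}) ∪ {horiz v false, horiz v true}

lemma horiz_mem_edgeSet {n : ℕ} (h1 : (1 : Z n) ≠ 0) (v : Z n) (c : Bool) :
    horiz v c ∈ (prism n).edgeSet := by
  rw [horiz, SimpleGraph.mem_edgeSet]
  refine (SimpleGraph.fromRel_adj _ _ _).mpr ⟨?_, Or.inl (Or.inr ⟨rfl, rfl⟩)⟩
  simp only [ne_eq, Prod.mk.injEq, not_and]
  intro hv
  exact absurd ((left_eq_add).mp hv) h1

lemma isPM_swapM {n : ℕ} (h1 : (1 : Z n) ≠ 0) (v : Z n) : IsPM (prism n) (swapM v) := by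
  have hne : v ≠ v + 1 := fun h => h1 ((left_eq_add).mp h)
  constructor
  · rintro e (⟨⟨w, rfl⟩, -⟩ | h)
    · exact rg_mem_edgeSet w
    · rcases h with rfl | rfl <;> exact horiz_mem_edgeSet h1 v _
  · rintro ⟨w, b⟩
    by_cases hw : w = v ∨ w = v + 1
    · refine ⟨horiz v b, ⟨Or.inr (by cases b <;> simp), mem_horiz.mpr ⟨hw, rfl⟩⟩, ?_⟩
      rintro f ⟨hf | hf, hmem⟩
      · exfalso
        obtain ⟨⟨u, rfl⟩, hnot⟩ := hf
        have : w = u := mem_rg.mp hmem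
        subst this
        rcases hw with rfl | rfl <;> simp [rg] at hnot
      · rcases hf with rfl | rfl <;>
        · obtain ⟨-, rfl⟩ := mem_horiz.mp hmem
          rfl
    · push_neg at hw
      refine ⟨rg w, ⟨Or.inl ⟨⟨w, rfl⟩, ?_⟩, mem_rg.mpr rfl⟩, ?_⟩
      · simp only [Set.mem_insert_iff, Set.mem_singleton_iff]
        push_neg
        exact ⟨fun h => hw.1 (rg_injective h), fun h => hw.2 (rg_injective h)⟩
      · rintro f ⟨hf | hf, hmem⟩
        · obtain ⟨⟨u, rfl⟩, -⟩ := hf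
          rw [show s((u,false),(u,true)) = rg u from rfl] at hmem ⊢
          rw [mem_rg.mp hmem]
        · exfalso
          rcases hf with rfl | rfl <;>
          · obtain ⟨h, -⟩ := mem_horiz.mp hmem
            tauto


lemma rg_forced {n : ℕ} (h1 : (1:Z n) ≠ 0) {M' : Set (Sym2 (Z n × Bool))}
    (hM' : IsPM (prism n) M') {u1 v u2 : Z n} (hp : rg u1 ∈ M') (hnx : rg u2 ∈ M')
    (e1 : u1 + 1 = v) (e2 : v + 1 = u2) : rg v ∈ M' := by
  have hvne : v ≠ u2 := by rintro rfl; exact h1 (left_eq_add.mp e2.symm)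
  have hvne1 : v ≠ u1 := by rintro rfl; exact h1 (left_eq_add.mp e1.symm)
  obtain ⟨e, ⟨heM, hve⟩, -⟩ := hM'.2 (v, false)
  have hadj := hM'.1 heM
  obtain ⟨w, rfl⟩ := Sym2.mem_iff_exists.mp hve
  rw [SimpleGraph.mem_edgeSet] at hadj
  rcases adj_cases hadj with rfl | rfl | ⟨hw1, hw2⟩
  · exact heM
  · exfalso
    rw [e2] at heM
    have hmem : (u2, false) ∈ s((v,false),(u2,false)) := Sym2.mem_mk_right _ _
    have := pm_eq hM' heM hnx hmem (mem_rg.mpr rfl)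
    have : (v, false) ∈ rg u2 := this ▸ Sym2.mem_mk_left _ _
    exact hvne (mem_rg.mp this)
  · exfalso
    have hw : w = (u1, false) := by
      have : w.1 = u1 := by
        have := hw1.trans e1.symm
        exact add_right_cancel this
      exact Prod.ext this hw2
    subst hw
    have hmem : (u1, false) ∈ s((v,false),(u1,false)) := Sym2.mem_mk_right _ _
    have := pm_eq hM' heM hp hmem (mem_rg.mpr rfl)
    have : (v, false) ∈ rg u1 := this ▸ Sym2.mem_mk_left _ _
    exact hvne1 (mem_rg.mp this)

def S0 (n : ℕ) : Set (Sym2 (Z n × Bool)) := {e | ∃ k : ℕ, k ≤ n ∧ e = rg ((2*k : ℕ) : Z n)}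

lemma S0_subset (n : ℕ) : S0 n ⊆ rungs n := by rintro e ⟨k, -, rfl⟩; exact ⟨_, rfl⟩

lemma S0_ncard (n : ℕ) : (S0 n).ncard = n + 1 := by
  have hS : S0 n = (fun k : ℕ => rg ((2*k : ℕ) : Z n)) '' (Set.Iic n) := by
    ext e
    simp only [S0, Set.mem_setOf_eq, Set.mem_image, Set.mem_Iic]
    tauto
  rw [hS, Set.ncard_image_of_injOn, ← Finset.coe_Iic, Set.ncard_coe_finset, Nat.card_Iic]
  intro a ha b hb hab
  have h := rg_injective hab
  have ha' := ZMod.val_cast_of_lt (a := 2*a) (n := 2*n+1) (by simp at ha; omega)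
  have hb' := ZMod.val_cast_of_lt (a := 2*b) (n := 2*n+1) (by simp at hb; omega)
  rw [h] at ha'
  omega

lemma forced_all {n : ℕ} (h1 : (1:Z n) ≠ 0) {M' : Set (Sym2 (Z n × Bool))}
    (hM' : IsPM (prism n) M') (hS : S0 n ⊆ M') (v : Z n) : rg v ∈ M' := by
  have hval : v.val < 2*n+1 := ZMod.val_lt v
  have hv : ((v.val : ℕ) : Z n) = v := ZMod.natCast_rightInverse v
  by_cases hpar : v.val % 2 = 0
  · have h2 : ((2 * (v.val / 2) : ℕ) : Z n) = ((v.val : ℕ) : Z n) := by congr 1; omega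
    exact hS ⟨v.val / 2, by omega, by rw [h2, hv]⟩
  · obtain ⟨j, hj⟩ : ∃ j, v.val = 2*j+1 := ⟨v.val / 2, by omega⟩
    have hp : rg ((2*j : ℕ) : Z n) ∈ M' := hS ⟨j, by omega, rfl⟩
    have hnx : rg ((2*(j+1) : ℕ) : Z n) ∈ M' := hS ⟨j+1, by omega, rfl⟩
    refine rg_forced h1 hM' hp hnx ?_ ?_
    · rw [← hv, hj]; push_cast; ring
    · rw [← hv, hj]; push_cast; ring

lemma forcing_S0 {n : ℕ} (h1 : (1:Z n) ≠ 0) : IsForcingSet (prism n) (rungs n) (S0 n) := by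
  refine ⟨S0_subset n, fun M' hPM hsub => ?_⟩
  apply Set.Subset.antisymm
  · intro e heM
    obtain ⟨⟨u, b⟩, hu⟩ : ∃ x, x ∈ e := ⟨e.out.1, Sym2.out_fst_mem e⟩
    exact ⟨u, pm_eq hPM heM (forced_all h1 hPM hsub u) hu (mem_rg.mpr rfl)⟩
  · rintro e ⟨v, rfl⟩
    exact forced_all h1 hPM hsub v


lemma one_ne_zero' {n : ℕ} (hn : 1 ≤ n) : (1 : Z n) ≠ 0 := by
  haveI : Fact (1 < 2*n+1) := ⟨by omega⟩
  exact one_ne_zero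

lemma lower_bound {n : ℕ} (hn : 1 ≤ n) {S : Set (Sym2 (Z n × Bool))}
    (hF : IsForcingSet (prism n) (rungs n) S) : n + 1 ≤ S.ncard := by
  have h1 : (1 : Z n) ≠ 0 := one_ne_zero' hn
  by_contra hlt
  push_neg at hlt
  set T : Set (Z n) := {v | rg v ∈ S} with hT
  have hSeq : S = rg '' T := by
    apply Set.Subset.antisymm
    · intro e he
      obtain ⟨v, rfl⟩ := hF.1 he
      exact ⟨v, he, rfl⟩
    · rintro e ⟨v, hv, rfl⟩; exact hv
  have hTcard : T.ncard = S.ncard := by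
    rw [hSeq, Set.ncard_image_of_injective _ rg_injective]
  have key : ∃ v, v ∉ T ∧ v + 1 ∉ T := by
    by_contra hno
    push_neg at hno
    have himg : (fun v => v + 1) '' Tᶜ ⊆ T := by
      rintro x ⟨v, hv, rfl⟩; exact hno v hv
    have hc1 : Tᶜ.ncard ≤ T.ncard := by
      rw [← Set.ncard_image_of_injective Tᶜ (add_left_injective (1 : Z n))]
      exact Set.ncard_le_ncard himg T.toFinite
    have hc2 : T.ncard + Tᶜ.ncard = 2*n+1 := by
      rw [Set.ncard_add_ncard_compl, Nat.card_zmod]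
    omega
  obtain ⟨v, hv1, hv2⟩ := key
  have hsub : S ⊆ swapM v := by
    intro e he
    obtain ⟨w, rfl⟩ := hF.1 he
    have hw : w ∈ T := he
    refine Or.inl ⟨⟨w, rfl⟩, ?_⟩
    simp only [Set.mem_insert_iff, Set.mem_singleton_iff]
    push_neg
    constructor
    · intro h; exact hv1 (rg_injective h ▸ hw)
    · intro h; exact hv2 (rg_injective h ▸ hw)
  have hMeq := hF.2 (swapM v) (isPM_swapM h1 v) hsub
  have hh : horiz v false ∈ rungs n := hMeq ▸ (Or.inr (Or.inl rfl))
  obtain ⟨u, hu⟩ := hh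
  have : (u, true) ∈ horiz v false := by
    rw [hu]; exact Sym2.mem_mk_right _ _
  exact absurd (mem_horiz.mp this).2 (by simp)

end Stmt6

/-- the matching of all rungs of the prism `C_{2n+1} □ K₂` has forcing
number `n + 1`. -/
theorem stmt_6 (n : ℕ) (hn : 1 ≤ n) :
    forcingNumber (prism n) (rungs n) = n + 1 := by
  have h1 : (1 : Stmt6.Z n) ≠ 0 := Stmt6.one_ne_zero' hn
  have hmem : (n+1) ∈ {m | ∃ S, IsForcingSet (prism n) (rungs n) S ∧ S.ncard = m} :=
    ⟨Stmt6.S0 n, Stmt6.forcing_S0 h1, Stmt6.S0_ncard n⟩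
  rw [forcingNumber]
  refine le_antisymm (Nat.sInf_le hmem) (le_csInf ⟨_, hmem⟩ ?_)
  rintro m ⟨S, hF, rfl⟩
  exact Stmt6.lower_bound hn hF
end

section
/- For n ≥ 1 and m ≥ 2, let G = T(2n+1, 2m) be the toroidal grid graph C_{2m} □ C_{2n+1} with vertices (u_i, v_j), i ∈ ℤ/2m, j ∈ ℤ/(2n+1). Let M₁ be the perfect matching consisting of all horizontal edges {(u_i,v_j),(u_{i+1},v_j)} with i odd, and M₂ the one with i even. Then there is no finite sequence of flips along 4-cycles (facial squares {(u_i,v_j),(u_{i+1},v_j),(u_{i+1},v_{j+1}),(u_i,v_{j+1})}) transforming M₁ into M₂. -/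
open SimpleGraph

variable {V : Type*}

/-- The toroidal grid `C_m □ C_n`: vertices `(i, j)` with `i ∈ ℤ/m`, `j ∈ ℤ/n`,
adjacent when they differ by one in exactly one coordinate. -/
def torus (m n : ℕ) : SimpleGraph (ZMod m × ZMod n) :=
  SimpleGraph.fromRel (fun x y => (x.1 = y.1 ∧ y.2 = x.2 + 1) ∨ (x.2 = y.2 ∧ y.1 = x.1 + 1))

/-- The facial square of the torus with bottom-left corner `(i, j)`. -/
def facialSquare (m n : ℕ) (i : ZMod m) (j : ZMod n) : Set (Sym2 (ZMod m × ZMod n)) :=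
  {s((i,j),(i+1,j)), s((i+1,j),(i+1,j+1)), s((i,j+1),(i+1,j+1)), s((i,j),(i,j+1))}

/-- The perfect matching `M₁` of `T(2n+1,2m)`: all horizontal edges leaving odd columns. -/
def horizOdd (m n : ℕ) : Set (Sym2 (ZMod (2*m) × ZMod (2*n+1))) :=
  {e | ∃ (i : ZMod (2*m)) (j : ZMod (2*n+1)), Odd i.val ∧ e = s((i,j),(i+1,j))}

/-- The perfect matching `M₂` of `T(2n+1,2m)`: all horizontal edges leaving even columns. -/
def horizEven (m n : ℕ) : Set (Sym2 (ZMod (2*m) × ZMod (2*n+1))) :=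
  {e | ∃ (i : ZMod (2*m)) (j : ZMod (2*n+1)), Even i.val ∧ e = s((i,j),(i+1,j))}

/-- One flip along a facial square: `M` and `M'` are perfect matchings of the torus whose
symmetric difference is a single facial square. -/
def TorusFlip (m n : ℕ) (M M' : Set (Sym2 (ZMod (2*m) × ZMod (2*n+1)))) : Prop :=
  IsPM (torus (2*m) (2*n+1)) M ∧ IsPM (torus (2*m) (2*n+1)) M' ∧
    ∃ i j, symmDiff M M' = facialSquare (2*m) (2*n+1) i j


section Invariant

open Classical Finset

/-- The parity (in `ZMod 2`) of the number of edges of `M` crossing the cut between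
column `0` and column `1`. -/
noncomputable def crossSum (m n : ℕ) (M : Set (Sym2 (ZMod (2*m) × ZMod (2*n+1)))) : ZMod 2 :=
  ∑ j : ZMod (2*n+1), if s(((0 : ZMod (2*m)), j), (1, j)) ∈ M then 1 else 0

lemma two_ne_zero_zmod {m : ℕ} (hm : 2 ≤ m) : (2 : ZMod (2*m)) ≠ 0 := by
  intro h
  have : ((2 : ℕ) : ZMod (2*m)) = 0 := by push_cast; exact h
  rw [ZMod.natCast_eq_zero_iff] at this
  have := Nat.le_of_dvd (by norm_num) this
  omega

lemma one_ne_zero_zmod {m : ℕ} (hm : 2 ≤ m) : (1 : ZMod (2*m)) ≠ 0 := by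
  haveI : Fact (1 < 2*m) := ⟨by omega⟩
  exact one_ne_zero

lemma one_ne_zero_zmod' {n : ℕ} (hn : 1 ≤ n) : (1 : ZMod (2*n+1)) ≠ 0 := by
  haveI : Fact (1 < 2*n+1) := ⟨by omega⟩
  exact one_ne_zero

lemma square_mem_iff {m n : ℕ} (hm : 2 ≤ m) (i : ZMod (2*m)) (j j₀ : ZMod (2*n+1)) :
    s(((0 : ZMod (2*m)), j₀), (1, j₀)) ∈ facialSquare (2*m) (2*n+1) i j ↔
      i = 0 ∧ (j₀ = j ∨ j₀ = j + 1) := by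
  have h1 : (1 : ZMod (2*m)) ≠ 0 := one_ne_zero_zmod hm
  have h2 : (2 : ZMod (2*m)) ≠ 0 := two_ne_zero_zmod hm
  simp only [facialSquare, Set.mem_insert_iff, Set.mem_singleton_iff, Sym2.eq_iff,
    Prod.mk.injEq]
  constructor
  · rintro ((⟨⟨hi, hj⟩, -, -⟩ | ⟨⟨hi, -⟩, hi', -⟩) |
      (⟨⟨hi, -⟩, hi', -⟩ | ⟨⟨hi, -⟩, hi', -⟩) |
      (⟨⟨hi, hj⟩, -, -⟩ | ⟨⟨hi, -⟩, hi', -⟩) |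
      (⟨⟨hi, -⟩, hi', -⟩ | ⟨⟨hi, -⟩, hi', -⟩))
    · exact ⟨hi.symm, Or.inl hj⟩
    · exact absurd (show (2 : ZMod (2*m)) = 0 by linear_combination hi' - hi) h2
    · exact absurd (show (1 : ZMod (2*m)) = 0 by linear_combination hi' - hi) h1
    · exact absurd (show (1 : ZMod (2*m)) = 0 by linear_combination hi' - hi) h1
    · exact ⟨hi.symm, Or.inr hj⟩
    · exact absurd (show (2 : ZMod (2*m)) = 0 by linear_combination hi' - hi) h2
    · exact absurd (show (1 : ZMod (2*m)) = 0 by linear_combination hi' - hi) h1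
    · exact absurd (show (1 : ZMod (2*m)) = 0 by linear_combination hi' - hi) h1
  · rintro ⟨rfl, rfl | rfl⟩ <;> simp

lemma crossSum_flip {m n : ℕ} (hm : 2 ≤ m) (hn : 1 ≤ n)
    {M M' : Set (Sym2 (ZMod (2*m) × ZMod (2*n+1)))}
    (h : TorusFlip m n M M') : crossSum m n M = crossSum m n M' := by
  obtain ⟨-, -, i, j, hsd⟩ := h
  have key : crossSum m n M + crossSum m n M' = 0 := by
    unfold crossSum
    rw [← Finset.sum_add_distrib]
    have hterm : ∀ j₀ : ZMod (2*n+1),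
        ((if s(((0 : ZMod (2*m)), j₀), (1, j₀)) ∈ M then 1 else 0) +
          (if s(((0 : ZMod (2*m)), j₀), (1, j₀)) ∈ M' then 1 else 0) : ZMod 2)
          = if i = 0 ∧ (j₀ = j ∨ j₀ = j + 1) then 1 else 0 := by
      intro j₀
      by_cases hsq : s(((0 : ZMod (2*m)), j₀), (1, j₀)) ∈ facialSquare (2*m) (2*n+1) i j
      · have hx : s(((0 : ZMod (2*m)), j₀), (1, j₀)) ∈ symmDiff M M' := hsd ▸ hsq
        rw [Set.mem_symmDiff] at hx
        rw [if_pos ((square_mem_iff hm i j j₀).mp hsq)]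
        rcases hx with ⟨ha, hb⟩ | ⟨ha, hb⟩ <;> simp [ha, hb]
      · have hx : s(((0 : ZMod (2*m)), j₀), (1, j₀)) ∉ symmDiff M M' := hsd ▸ hsq
        rw [Set.mem_symmDiff] at hx
        push_neg at hx
        rw [if_neg (fun hc => hsq ((square_mem_iff hm i j j₀).mpr hc))]
        by_cases hMe : s(((0 : ZMod (2*m)), j₀), (1, j₀)) ∈ M
        · rw [if_pos hMe, if_pos (hx.1 hMe)]; decide
        · rw [if_neg hMe, if_neg (fun hc => hMe (hx.2 hc))]; decide
    rw [Finset.sum_congr rfl (fun j₀ _ => hterm j₀)]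
    by_cases hi : i = 0
    · simp only [hi, true_and]
      have hjj : j ≠ j + 1 := by
        intro hc
        exact one_ne_zero_zmod' hn (left_eq_add.mp hc)
      have hsplit : ∀ j₀ : ZMod (2*n+1),
          (if j₀ = j ∨ j₀ = j + 1 then (1 : ZMod 2) else 0)
            = (if j₀ = j then 1 else 0) + (if j₀ = j + 1 then 1 else 0) := by
        intro j₀
        by_cases ha : j₀ = j <;> by_cases hb : j₀ = j + 1
        · exact absurd (ha ▸ hb) hjj
        · rw [if_pos (Or.inl ha), if_pos ha, if_neg hb, add_zero]
        · rw [if_pos (Or.inr hb), if_neg ha, if_pos hb, zero_add]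
        · simp [ha, hb]
      rw [Finset.sum_congr rfl (fun j₀ _ => hsplit j₀), Finset.sum_add_distrib]
      rw [Finset.sum_ite_eq' Finset.univ j (fun _ => (1 : ZMod 2)),
        Finset.sum_ite_eq' Finset.univ (j+1) (fun _ => (1 : ZMod 2))]
      simp only [Finset.mem_univ, if_true]
      decide
    · simp [hi]
  have hab : ∀ a b : ZMod 2, a + b = 0 → a = b := by decide
  exact hab _ _ key

lemma crossSum_horizOdd {m n : ℕ} (hm : 2 ≤ m) : crossSum m n (horizOdd m n) = 0 := by
  have h2 : (2 : ZMod (2*m)) ≠ 0 := two_ne_zero_zmod hm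
  haveI : NeZero (2*m) := ⟨by omega⟩
  unfold crossSum
  apply Finset.sum_eq_zero
  intro j _
  rw [if_neg]
  rintro ⟨i, j', hodd, heq⟩
  rw [Sym2.eq_iff] at heq
  simp only [Prod.mk.injEq] at heq
  rcases heq with ⟨⟨hi, -⟩, -, -⟩ | ⟨⟨hi, -⟩, hi', -⟩
  · rw [← hi] at hodd
    simp [ZMod.val_zero] at hodd
  · exact h2 (by linear_combination hi' - hi)

lemma crossSum_horizEven {m n : ℕ} (hm : 2 ≤ m) : crossSum m n (horizEven m n) = 1 := by
  haveI : NeZero (2*m) := ⟨by omega⟩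
  unfold crossSum
  have hmem : ∀ j : ZMod (2*n+1), s(((0 : ZMod (2*m)), j), (1, j)) ∈ horizEven m n := by
    intro j
    exact ⟨0, j, by simp [ZMod.val_zero], by rw [zero_add]⟩
  rw [Finset.sum_congr rfl (fun j _ => if_pos (hmem j))]
  rw [Finset.sum_const, Finset.card_univ, ZMod.card, nsmul_eq_mul, mul_one]
  have : ((2*n+1 : ℕ) : ZMod 2) = 1 := by
    push_cast
    have h2 : ((2 : ℕ) : ZMod 2) = 0 := by decide
    push_cast at h2
    rw [h2]
    ring
  exact this

end Invariant

/-- no sequence of flips along facial squares transforms `M₁` into `M₂`. -/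
theorem stmt_7 (n m : ℕ) (hn : 1 ≤ n) (hm : 2 ≤ m) :
    ¬ Relation.ReflTransGen (TorusFlip m n) (horizOdd m n) (horizEven m n) := by
  intro h
  have hgen : ∀ A B : Set (Sym2 (ZMod (2*m) × ZMod (2*n+1))),
      Relation.ReflTransGen (TorusFlip m n) A B → crossSum m n A = crossSum m n B := by
    intro A B hAB
    induction hAB with
    | refl => rfl
    | tail _ hstep ih => exact ih.trans (crossSum_flip hm hn hstep)
  have hinv := hgen _ _ h
  rw [crossSum_horizOdd hm, crossSum_horizEven hm] at hinv
  exact absurd hinv (by decide)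
end

section
/- For n ≥ 1 and m ≥ 2, let G = T(2n+1, 2m) = C_{2m} □ C_{2n+1}, and let M be any perfect matching of G. Then there is a finite sequence of flips along facial squares transforming M into a perfect matching M' such that M' contains no horizontal edge between some pair of consecutive columns, i.e. M' ∩ E_i = ∅ for some i ∈ ℤ/2m, where E_i = {{(u_i,v_j),(u_{i+1},v_j)} : j ∈ ℤ/(2n+1)}. -/
open SimpleGraph

variable {V : Type*}

/-- The set `E_i` of horizontal edges between columns `i` and `i+1`. -/
def colEdges (m n : ℕ) (i : ZMod m) : Set (Sym2 (ZMod m × ZMod n)) :=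
  {e | ∃ j : ZMod n, e = s((i,j),(i+1,j))}

/-!
Induct on the number of horizontal edges of `M`. Call a horizontal edge of `M` between columns
`g` and `g + 1` a rung of `g`. If every `g` has a rung, there are two rungs of some `g`, at rows
`j` and `j + s`, such that all vertices of columns `g` and `g + 1` strictly between them are
matched vertically. Flipping the squares at rows `j + 1` and `j` moves the lower rung up by two
rows; when the two rungs are adjacent, one more flip replaces them by vertical edges.

Such rungs exist by parity. As the number of rows is odd, every column has an odd number of
horizontally matched vertices, and two consecutive ones are an odd distance apart because the
vertices between them are matched vertically. So the rungs on the two sides of a column cannot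
alternate, and there are two consecutive rungs of the same `g` with no rung of one neighbour
`g + ε` between them. A shortest such pair also has no rung of `g - ε` between them: such rungs
would come at least in pairs, and the first two would form a shorter pair.
-/

namespace IsPM

variable {G : SimpleGraph V} {M : Set (Sym2 V)}

theorem eq_of_mem (hM : IsPM G M) {e e' : Sym2 V} (he : e ∈ M) (he' : e' ∈ M) {v : V}
    (hv : v ∈ e) (hv' : v ∈ e') : e = e' :=
  (hM.2 v).unique ⟨he, hv⟩ ⟨he', hv'⟩

theorem existsUnique_mem_symmDiff (hM : IsPM G M) {S : Set (Sym2 V)} {v : V}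
    (hS : ∀ e ∈ S, v ∉ e) : ∃! e, e ∈ symmDiff M S ∧ v ∈ e := by
  obtain ⟨e, ⟨heM, hve⟩, huniq⟩ := hM.2 v
  refine ⟨e, ⟨Set.mem_symmDiff.2 (.inl ⟨heM, fun h => hS e h hve⟩), hve⟩, ?_⟩
  rintro e' ⟨he', hve'⟩
  rcases Set.mem_symmDiff.1 he' with ⟨he'M, -⟩ | ⟨he'S, -⟩
  · exact huniq e' ⟨he'M, hve'⟩
  · exact absurd hve' (hS e' he'S)

theorem symmDiff_square (hM : IsPM G M) {A B C D : V} (hAB : s(A, B) ∈ M) (hCD : s(C, D) ∈ M)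
    (hAC : G.Adj A C) (hBD : G.Adj B D) (hAD : A ≠ D) (hBC : B ≠ C) :
    IsPM G (symmDiff M {s(A, B), s(C, D), s(A, C), s(B, D)}) := by
  have hAB' : A ≠ B := (hM.1 hAB).ne
  have hCD' : C ≠ D := (hM.1 hCD).ne
  have hACM : s(A, C) ∉ M := fun h => by
    simpa [hBC, hAC.ne] using hM.eq_of_mem hAB h (Sym2.mem_mk_left A B) (Sym2.mem_mk_left A C)
  have hBDM : s(B, D) ∉ M := fun h => by
    simpa [hAD, hAB'] using hM.eq_of_mem hAB h (Sym2.mem_mk_right A B) (Sym2.mem_mk_left B D)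
  refine ⟨fun e he => ?_, fun v => ?_⟩
  · rcases Set.mem_symmDiff.1 he with ⟨he, -⟩ | ⟨he, -⟩
    · exact hM.1 he
    · rcases he with rfl | rfl | rfl | rfl
      exacts [hM.1 hAB, hM.1 hCD, hAC, hBD]
  by_cases hv : v = A ∨ v = B ∨ v = C ∨ v = D
  swap
  · simp only [not_or] at hv
    refine hM.existsUnique_mem_symmDiff ?_
    rintro e (rfl | rfl | rfl | rfl) <;> simp [hv.1, hv.2.1, hv.2.2.1, hv.2.2.2]
  have hold : ∀ e ∈ M, v ∈ e → e = s(A, B) ∨ e = s(C, D) := by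
    intro e he hve
    rcases hv with rfl | rfl | rfl | rfl
    exacts [.inl (hM.eq_of_mem he hAB hve (by simp)), .inl (hM.eq_of_mem he hAB hve (by simp)),
      .inr (hM.eq_of_mem he hCD hve (by simp)), .inr (hM.eq_of_mem he hCD hve (by simp))]
  obtain ⟨e₀, he₀, hve₀⟩ : ∃ e₀, (e₀ = s(A, C) ∨ e₀ = s(B, D)) ∧ v ∈ e₀ := by
    rcases hv with rfl | rfl | rfl | rfl
    exacts [⟨_, .inl rfl, by simp⟩, ⟨_, .inr rfl, by simp⟩, ⟨_, .inl rfl, by simp⟩,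
      ⟨_, .inr rfl, by simp⟩]
  refine ⟨e₀, ⟨Set.mem_symmDiff.2 (.inr ⟨?_, ?_⟩), hve₀⟩, ?_⟩
  · rcases he₀ with rfl | rfl <;> simp
  · rcases he₀ with rfl | rfl <;> assumption
  rintro e ⟨he, hve⟩
  rcases Set.mem_symmDiff.1 he with ⟨heM, heS⟩ | ⟨heS, heM⟩
  · rcases hold e heM hve with rfl | rfl <;> simp at heS
  · rcases heS with rfl | rfl | rfl | rfl
    · exact absurd hAB heM
    · exact absurd hCD heM
    all_goals rcases he₀ with rfl | rfl <;> simp only [Sym2.mem_iff] at hve hve₀ <;> grind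

end IsPM

namespace ZMod

variable {n : ℕ}

instance neZero_of_two_lt [Fact (2 < n)] : NeZero n := ⟨by have := (Fact.out : 2 < n); omega⟩

theorem natCast_ne_zero_of_lt {t : ℕ} (h0 : 0 < t) (ht : t < n) : (t : ZMod n) ≠ 0 := by
  rw [Ne, natCast_eq_zero_iff]
  exact Nat.not_dvd_of_pos_of_lt h0 ht

theorem add_natCast_ne_add_natCast (j : ZMod n) {t t' : ℕ} (ht : t < n) (ht' : t' < n)
    (h : t ≠ t') : j + (t : ZMod n) ≠ j + t' := by
  rwa [Ne, add_right_inj, natCast_eq_natCast_iff', Nat.mod_eq_of_lt ht, Nat.mod_eq_of_lt ht']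

theorem add_one_ne_self [Fact (2 < n)] (j : ZMod n) : j + 1 ≠ j :=
  add_ne_left.2 <| by
    exact_mod_cast natCast_ne_zero_of_lt one_pos (by have := (Fact.out : 2 < n); omega)

theorem two_ne_zero [Fact (2 < n)] : (2 : ZMod n) ≠ 0 := by
  exact_mod_cast natCast_ne_zero_of_lt two_pos (Fact.out : 2 < n)

/-- The arc `{j + 1, …, j + (s - 1)}` of the cycle `ZMod n`. -/
def openArc (j : ZMod n) (s : ℕ) : Set (ZMod n) := (fun t : ℕ => j + (t : ZMod n)) '' Set.Ioo 0 s

theorem add_mem_openArc {j : ZMod n} {s t : ℕ} (h0 : 0 < t) (hts : t < s) :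
    j + t ∈ openArc j s :=
  ⟨t, ⟨h0, hts⟩, rfl⟩

theorem openArc_subset_openArc {j : ZMod n} {s t : ℕ} (h : t ≤ s) : openArc j t ⊆ openArc j s :=
  Set.image_mono (Set.Ioo_subset_Ioo_right h)

theorem openArc_add_subset {j : ZMod n} {s t u : ℕ} (h : t + u ≤ s) :
    openArc (j + (t : ZMod n)) u ⊆ openArc j s := by
  rintro _ ⟨v, ⟨hv, hvu⟩, rfl⟩
  exact ⟨t + v, ⟨by omega, by omega⟩, by push_cast; ring⟩

theorem mem_openArc_of_ne [NeZero n] {j r : ZMod n} (h : r ≠ j) : r ∈ openArc j n :=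
  ⟨(r - j).val, ⟨Nat.pos_of_ne_zero fun h' => h (sub_eq_zero.1 ((val_eq_zero _).1 h')), val_lt _⟩,
    by simp⟩

theorem exists_first_mem_openArc {X : Set (ZMod n)} {j : ZMod n} {s : ℕ}
    (h : ¬Disjoint (openArc j s) X) :
    ∃ t : ℕ, 0 < t ∧ t < s ∧ j + t ∈ X ∧ Disjoint (openArc j t) X := by
  classical
  have hex : ∃ t : ℕ, 0 < t ∧ t < s ∧ j + t ∈ X := by
    obtain ⟨_, ⟨t, ⟨h0, hts⟩, rfl⟩, hX⟩ := Set.not_disjoint_iff.1 h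
    exact ⟨t, h0, hts, hX⟩
  obtain ⟨h0, hts, hX⟩ := Nat.find_spec hex
  refine ⟨_, h0, hts, hX, Set.disjoint_left.2 ?_⟩
  rintro _ ⟨t, ⟨ht0, ht⟩, rfl⟩ htX
  exact Nat.find_min hex ht ⟨ht0, ht.trans hts, htX⟩

/-- The successor map of a subset of the cycle is injective. -/
theorem eq_of_add_eq_add_of_disjoint_openArc {X : Set (ZMod n)} {j j' : ZMod n} {t t' : ℕ}
    (hj : j ∈ X) (hj' : j' ∈ X) (h0 : 0 < t) (h0' : 0 < t') (ht : Disjoint (openArc j t) X)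
    (ht' : Disjoint (openArc j' t') X) (h : j + t = j' + t') : j = j' := by
  wlog htt : t ≤ t' generalizing j j' t t'
  · exact (this hj' hj h0' h0 ht' ht h.symm (le_of_not_ge htt)).symm
  rcases htt.eq_or_lt with rfl | hlt
  · exact add_right_cancel h
  have hmem : j' + ((t' - t : ℕ) : ZMod n) = j := by
    push_cast [Nat.cast_sub hlt.le]
    linear_combination -h
  exact absurd hj (Set.disjoint_left.1 ht' (hmem ▸ add_mem_openArc (by omega) (by omega)))

/-- Two disjoint nonempty sets whose union has odd size cannot alternate around the cycle. -/
theorem exists_consecutive_of_odd_ncard [NeZero n] {A B : Set (ZMod n)} (hAB : Disjoint A B)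
    (hA : A.Nonempty) (hB : B.Nonempty) (hodd : Odd (A ∪ B).ncard) :
    ∃ (j : ZMod n) (t : ℕ), 0 < t ∧ t < n ∧ Disjoint (openArc j t) (A ∪ B) ∧
      (j ∈ A ∧ j + t ∈ A ∨ j ∈ B ∧ j + t ∈ B) := by
  by_contra! h
  have hnext : ∀ j, ∃ t : ℕ, j ∈ A ∪ B →
      0 < t ∧ t < n ∧ j + t ∈ A ∪ B ∧ Disjoint (openArc j t) (A ∪ B) := by
    intro j
    obtain ⟨x, hx⟩ := hA
    obtain ⟨y, hy⟩ := hB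
    by_cases hxj : x = j
    · have hyj : y ≠ j := fun hyj => hAB.ne_of_mem hx hy (hxj.trans hyj.symm)
      obtain ⟨t, ht⟩ := exists_first_mem_openArc
        (Set.not_disjoint_iff.2 ⟨y, mem_openArc_of_ne hyj, Set.mem_union_right A hy⟩)
      exact ⟨t, fun _ => ht⟩
    · obtain ⟨t, ht⟩ := exists_first_mem_openArc
        (Set.not_disjoint_iff.2 ⟨x, mem_openArc_of_ne hxj, Set.mem_union_left B hx⟩)
      exact ⟨t, fun _ => ht⟩
  choose σ hσ using hnext
  have hinj : Set.InjOn (fun j => j + (σ j : ZMod n)) (A ∪ B) := fun j hj j' hj' h =>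
    eq_of_add_eq_add_of_disjoint_openArc hj hj' (hσ j hj).1 (hσ j' hj').1 (hσ j hj).2.2.2
      (hσ j' hj').2.2.2 h
  have hAB' : Set.MapsTo (fun j => j + (σ j : ZMod n)) A B := fun j hj => by
    obtain ⟨h0, hlt, hmem, hdisj⟩ := hσ j (.inl hj)
    exact hmem.resolve_left ((h j (σ j) h0 hlt hdisj).1 hj)
  have hBA : Set.MapsTo (fun j => j + (σ j : ZMod n)) B A := fun j hj => by
    obtain ⟨h0, hlt, hmem, hdisj⟩ := hσ j (.inr hj)
    exact hmem.resolve_right ((h j (σ j) h0 hlt hdisj).2 hj)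
  have h₁ := Set.ncard_le_ncard_of_injOn _ hAB' (hinj.mono Set.subset_union_left)
  have h₂ := Set.ncard_le_ncard_of_injOn _ hBA (hinj.mono Set.subset_union_right)
  rw [Set.ncard_union_eq hAB, Nat.odd_iff] at hodd
  omega

end ZMod

namespace Torus

open ZMod (openArc add_mem_openArc openArc_subset_openArc openArc_add_subset
  exists_first_mem_openArc)

variable {a b : ℕ}

def hEdge (i : ZMod a) (j : ZMod b) : Sym2 (ZMod a × ZMod b) := s((i, j), (i + 1, j))

def vEdge (i : ZMod a) (j : ZMod b) : Sym2 (ZMod a × ZMod b) := s((i, j), (i, j + 1))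

theorem hEdge_inj [Fact (2 < a)] {i i' : ZMod a} {j j' : ZMod b} :
    hEdge i j = hEdge i' j' ↔ i = i' ∧ j = j' := by
  refine ⟨fun h => ?_, by rintro ⟨rfl, rfl⟩; rfl⟩
  rcases Sym2.eq_iff.1 h with ⟨h, -⟩ | ⟨h₁, h₂⟩
  · exact Prod.ext_iff.1 h
  · simp only [Prod.ext_iff] at h₁ h₂
    exact absurd (by linear_combination h₂.1 - h₁.1) ZMod.two_ne_zero

theorem vEdge_inj [Fact (2 < b)] {i i' : ZMod a} {j j' : ZMod b} :
    vEdge i j = vEdge i' j' ↔ i = i' ∧ j = j' := by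
  refine ⟨fun h => ?_, by rintro ⟨rfl, rfl⟩; rfl⟩
  rcases Sym2.eq_iff.1 h with ⟨h, -⟩ | ⟨h₁, h₂⟩
  · exact Prod.ext_iff.1 h
  · simp only [Prod.ext_iff] at h₁ h₂
    exact absurd (by linear_combination h₂.2 - h₁.2) ZMod.two_ne_zero

theorem hEdge_ne_vEdge [Fact (2 < a)] (i i' : ZMod a) (j j' : ZMod b) :
    hEdge i j ≠ vEdge i' j' := by
  intro h
  rcases Sym2.eq_iff.1 h with ⟨h₁, h₂⟩ | ⟨h₁, h₂⟩ <;> simp only [Prod.ext_iff] at h₁ h₂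
  · exact ZMod.add_one_ne_self i (h₂.1.trans h₁.1.symm)
  · exact ZMod.add_one_ne_self i (h₂.1.trans h₁.1.symm)

theorem hEdge_mem_edgeSet [Fact (2 < a)] (i : ZMod a) (j : ZMod b) :
    hEdge i j ∈ (torus a b).edgeSet := by
  refine (torus a b).mem_edgeSet.2 ((fromRel_adj _ _ _).2 ⟨fun h => ?_, .inl (.inr ⟨rfl, rfl⟩)⟩)
  exact ZMod.add_one_ne_self i (Prod.ext_iff.1 h).1.symm

theorem vEdge_mem_edgeSet [Fact (2 < b)] (i : ZMod a) (j : ZMod b) :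
    vEdge i j ∈ (torus a b).edgeSet := by
  refine (torus a b).mem_edgeSet.2 ((fromRel_adj _ _ _).2 ⟨fun h => ?_, .inl (.inl ⟨rfl, rfl⟩)⟩)
  exact ZMod.add_one_ne_self j (Prod.ext_iff.1 h).2.symm

theorem eq_hEdge_or_vEdge_of_mem {e : Sym2 (ZMod a × ZMod b)} (he : e ∈ (torus a b).edgeSet)
    {i : ZMod a} {j : ZMod b} (hv : (i, j) ∈ e) :
    e = hEdge i j ∨ e = hEdge (i - 1) j ∨ e = vEdge i j ∨ e = vEdge i (j - 1) := by
  obtain ⟨⟨i', j'⟩, rfl⟩ := Sym2.mem_iff_exists.1 hv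
  obtain ⟨-, ((⟨rfl, rfl⟩ | ⟨rfl, rfl⟩) | (⟨rfl, h⟩ | ⟨rfl, h⟩))⟩ :=
    (fromRel_adj _ _ _).1 ((torus a b).mem_edgeSet.1 he)
  · exact .inr (.inr (.inl rfl))
  · exact .inl rfl
  · refine .inr (.inr (.inr ?_))
    rw [vEdge, show j = j' + 1 from h, add_sub_cancel_right, Sym2.eq_swap]
  · refine .inr (.inl ?_)
    rw [hEdge, show i = i' + 1 from h, add_sub_cancel_right, Sym2.eq_swap]

def IsFlip (a b : ℕ) (M M' : Set (Sym2 (ZMod a × ZMod b))) : Prop :=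
  IsPM (torus a b) M ∧ IsPM (torus a b) M' ∧ ∃ i j, symmDiff M M' = facialSquare a b i j

theorem isPM_of_reflTransGen {M M' : Set (Sym2 (ZMod a × ZMod b))}
    (h : Relation.ReflTransGen (IsFlip a b) M M') (hM : IsPM (torus a b) M) :
    IsPM (torus a b) M' := by
  induction h with
  | refl => exact hM
  | tail _ hflip _ => exact hflip.2.1

variable {M : Set (Sym2 (ZMod a × ZMod b))} {g i : ZMod a} {j : ZMod b} {s : ℕ}

theorem isFlip_of_hEdge_mem [Fact (2 < a)] [Fact (2 < b)] (hM : IsPM (torus a b) M)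
    (h₀ : hEdge i j ∈ M) (h₁ : hEdge i (j + 1) ∈ M) :
    IsFlip a b M (symmDiff M (facialSquare a b i j)) := by
  have hsq : facialSquare a b i j = {hEdge i j, hEdge i (j + 1), vEdge i j, vEdge (i + 1) j} := by
    ext
    simp only [facialSquare, hEdge, vEdge, Set.mem_insert_iff, Set.mem_singleton_iff]
    tauto
  refine ⟨hM, ?_, i, j, symmDiff_symmDiff_cancel_left M _⟩
  rw [hsq]
  exact hM.symmDiff_square h₀ h₁ (vEdge_mem_edgeSet i j) (vEdge_mem_edgeSet (i + 1) j)
    (fun h => ZMod.add_one_ne_self i (congrArg Prod.fst h).symm)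
    (fun h => ZMod.add_one_ne_self i (congrArg Prod.fst h))

theorem isFlip_of_vEdge_mem [Fact (2 < a)] [Fact (2 < b)] (hM : IsPM (torus a b) M)
    (h₀ : vEdge i j ∈ M) (h₁ : vEdge (i + 1) j ∈ M) :
    IsFlip a b M (symmDiff M (facialSquare a b i j)) := by
  have hsq : facialSquare a b i j = {vEdge i j, vEdge (i + 1) j, hEdge i j, hEdge i (j + 1)} := by
    ext
    simp only [facialSquare, hEdge, vEdge, Set.mem_insert_iff, Set.mem_singleton_iff]
    tauto
  refine ⟨hM, ?_, i, j, symmDiff_symmDiff_cancel_left M _⟩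
  rw [hsq]
  exact hM.symmDiff_square h₀ h₁ (hEdge_mem_edgeSet i j) (hEdge_mem_edgeSet i (j + 1))
    (fun h => ZMod.add_one_ne_self j (congrArg Prod.snd h).symm)
    (fun h => ZMod.add_one_ne_self j (congrArg Prod.snd h))

def horizontalEdges : Set (Sym2 (ZMod a × ZMod b)) := {e | ∃ i j, e = hEdge i j}

theorem hEdge_ne_hEdge_add_one [Fact (2 < a)] [Fact (2 < b)] (i : ZMod a) (j : ZMod b) :
    hEdge i j ≠ hEdge i (j + 1) :=
  fun h => ZMod.add_one_ne_self j (hEdge_inj.1 h).2.symm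

theorem facialSquare_inter_horizontalEdges [Fact (2 < a)] (i : ZMod a) (j : ZMod b) :
    facialSquare a b i j ∩ horizontalEdges = {hEdge i j, hEdge i (j + 1)} := by
  ext e
  constructor
  · rintro ⟨he | he | he | he, i', j', rfl⟩
    · exact .inl he
    · exact absurd he (hEdge_ne_vEdge _ _ _ _)
    · exact .inr he
    · exact absurd he (hEdge_ne_vEdge _ _ _ _)
  · rintro (rfl | rfl)
    exacts [⟨.inl rfl, _, _, rfl⟩, ⟨.inr (.inr (.inl rfl)), _, _, rfl⟩]

theorem ncard_symmDiff_inter_horizontalEdges_of_hEdge [Fact (2 < a)] [Fact (2 < b)]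
    (h₀ : hEdge i j ∈ M) (h₁ : hEdge i (j + 1) ∈ M) :
    (symmDiff M (facialSquare a b i j) ∩ horizontalEdges).ncard + 2 =
      (M ∩ horizontalEdges).ncard := by
  have hsub : {hEdge i j, hEdge i (j + 1)} ⊆ M ∩ horizontalEdges := by
    rintro _ (rfl | rfl)
    exacts [⟨h₀, _, _, rfl⟩, ⟨h₁, _, _, rfl⟩]
  rw [Set.inter_symmDiff_distrib_right, facialSquare_inter_horizontalEdges, symmDiff_of_ge hsub,
    ← Set.ncard_pair (hEdge_ne_hEdge_add_one i j), Set.ncard_sdiff_add_ncard_of_subset hsub]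

theorem ncard_symmDiff_inter_horizontalEdges_of_vEdge [Fact (2 < a)] [Fact (2 < b)]
    (h₀ : hEdge i j ∉ M) (h₁ : hEdge i (j + 1) ∉ M) :
    (symmDiff M (facialSquare a b i j) ∩ horizontalEdges).ncard =
      (M ∩ horizontalEdges).ncard + 2 := by
  have hdisj : Disjoint (M ∩ horizontalEdges) {hEdge i j, hEdge i (j + 1)} := by
    rw [Set.disjoint_right]
    rintro _ (rfl | rfl) ⟨h, -⟩
    exacts [h₀ h, h₁ h]
  rw [Set.inter_symmDiff_distrib_right, facialSquare_inter_horizontalEdges, hdisj.symmDiff_eq_sup,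
    ← Set.ncard_pair (hEdge_ne_hEdge_add_one i j)]
  exact Set.ncard_union_eq hdisj

def rungs (M : Set (Sym2 (ZMod a × ZMod b))) (g : ZMod a) : Set (ZMod b) := {r | hEdge g r ∈ M}

/-- The rows `r` at which the vertex `(c, r)` is covered by a horizontal edge of `M`. -/
def horizRows (M : Set (Sym2 (ZMod a × ZMod b))) (c : ZMod a) : Set (ZMod b) :=
  rungs M (c - 1) ∪ rungs M c

theorem rungs_subset_horizRows (g : ZMod a) : rungs M g ⊆ horizRows M g :=
  Set.subset_union_right

theorem rungs_subset_horizRows_add_one (g : ZMod a) : rungs M g ⊆ horizRows M (g + 1) := by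
  rw [horizRows, add_sub_cancel_right]
  exact Set.subset_union_left

theorem mem_rungs_symmDiff_facialSquare_iff [Fact (2 < a)] {r : ZMod b}
    (h₀ : r ≠ j) (h₁ : r ≠ j + 1) :
    r ∈ rungs (symmDiff M (facialSquare a b i j)) g ↔ r ∈ rungs M g := by
  have : hEdge g r ∉ facialSquare a b i j := by
    rintro (h | h | h | h)
    · exact h₀ (hEdge_inj.1 h).2
    · exact hEdge_ne_vEdge _ _ _ _ h
    · exact h₁ (hEdge_inj.1 h).2
    · exact hEdge_ne_vEdge _ _ _ _ h
  simp [rungs, Set.mem_symmDiff, this]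

theorem mem_horizRows_symmDiff_facialSquare_iff [Fact (2 < a)] {c : ZMod a} {r : ZMod b}
    (h₀ : r ≠ j) (h₁ : r ≠ j + 1) :
    r ∈ horizRows (symmDiff M (facialSquare a b i j)) c ↔ r ∈ horizRows M c := by
  simp only [horizRows, Set.mem_union, mem_rungs_symmDiff_facialSquare_iff h₀ h₁]

theorem mem_horizRows_or_vEdge_mem (hM : IsPM (torus a b) M) (c : ZMod a) (r : ZMod b) :
    r ∈ horizRows M c ∨ vEdge c r ∈ M ∨ vEdge c (r - 1) ∈ M := by
  obtain ⟨e, ⟨he, hv⟩, -⟩ := hM.2 (c, r)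
  rcases eq_hEdge_or_vEdge_of_mem (hM.1 he) hv with rfl | rfl | rfl | rfl
  exacts [.inl (.inr he), .inl (.inl he), .inr (.inl he), .inr (.inr he)]

theorem vEdge_not_mem_of_mem_horizRows [Fact (2 < a)] (hM : IsPM (torus a b) M) {c : ZMod a}
    {r r' : ZMod b} (hr : r ∈ horizRows M c) (hv : (c, r) ∈ vEdge c r') : vEdge c r' ∉ M := by
  intro h
  rcases hr with hr | hr
  · exact hEdge_ne_vEdge _ _ _ _ (hM.eq_of_mem hr h (by simp [hEdge]) hv)
  · exact hEdge_ne_vEdge _ _ _ _ (hM.eq_of_mem hr h (by simp [hEdge]) hv)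

theorem vEdge_add_one_mem (hM : IsPM (torus a b) M) {c : ZMod a} {r : ZMod b}
    (hr : vEdge c r ∉ M) (hr' : r + 1 ∉ horizRows M c) : vEdge c (r + 1) ∈ M := by
  rcases mem_horizRows_or_vEdge_mem hM c (r + 1) with h | h | h
  · exact absurd h hr'
  · exact h
  · rw [add_sub_cancel_right] at h
    exact absurd h hr

theorem disjoint_rungs_sub_one [Fact (2 < a)] (hM : IsPM (torus a b) M) (c : ZMod a) :
    Disjoint (rungs M (c - 1)) (rungs M c) := by
  refine Set.disjoint_left.2 fun r h₁ h₂ => ?_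
  have := hEdge_inj.1 (hM.eq_of_mem h₁ h₂ (by simp [hEdge]) (Sym2.mem_mk_left _ _))
  exact ZMod.add_one_ne_self (c - 1) (by rw [sub_add_cancel]; exact this.1.symm)

/-- The vertices of column `c` not covered horizontally are paired up by vertical edges. -/
theorem odd_ncard_horizRows [Fact (2 < a)] [Fact (2 < b)] (hM : IsPM (torus a b) M)
    (hb : Odd b) (c : ZMod a) : Odd (horizRows M c).ncard := by
  set D : Set (ZMod b) := {r | vEdge c r ∈ M}
  have hcompl : (horizRows M c)ᶜ = D ∪ (· + 1) '' D := by
    ext r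
    refine ⟨fun hr => ?_, ?_⟩
    · rcases mem_horizRows_or_vEdge_mem hM c r with h | h | h
      exacts [absurd h hr, .inl h, .inr ⟨r - 1, h, sub_add_cancel r 1⟩]
    · rintro (h | ⟨r, h, rfl⟩) hr
      · exact vEdge_not_mem_of_mem_horizRows hM hr (Sym2.mem_mk_left _ _) h
      · exact vEdge_not_mem_of_mem_horizRows hM hr (Sym2.mem_mk_right _ _) h
  have hdisj : Disjoint D ((· + 1) '' D) := by
    refine Set.disjoint_left.2 ?_
    rintro _ h ⟨r, hr, rfl⟩
    exact ZMod.add_one_ne_self r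
      (vEdge_inj.1 (hM.eq_of_mem h hr (Sym2.mem_mk_left _ _) (Sym2.mem_mk_right _ _))).2
  have hcard := Set.ncard_add_ncard_compl (horizRows M c)
  rw [hcompl, Set.ncard_union_eq hdisj, Set.ncard_image_of_injective _ (add_left_injective 1),
    Nat.card_zmod] at hcard
  rw [Nat.odd_iff] at hb ⊢
  omega

/-- The vertices of column `c` strictly between rows `j` and `j + s` are matched vertically in
pairs, starting from row `j + 1`. -/
theorem odd_of_disjoint_openArc [Fact (2 < a)] [Fact (2 < b)] (hM : IsPM (torus a b) M)
    {c : ZMod a} :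
    ∀ {j : ZMod b}, vEdge c j ∉ M → 0 < s → j + s ∈ horizRows M c →
      Disjoint (openArc j s) (horizRows M c) → Odd s := by
  induction s using Nat.strong_induction_on with
  | _ s ih =>
  intro j hj hs hjs harc
  obtain rfl | hs1 := eq_or_ne s 1
  · exact odd_one
  have h₁ : j + 1 ∉ horizRows M c :=
    Set.disjoint_left.1 harc (by simpa using add_mem_openArc (j := j) one_pos (by omega : 1 < s))
  have hv : vEdge c (j + 1) ∈ M := vEdge_add_one_mem hM hj h₁
  have hv' : (c, j + 1 + 1) ∈ vEdge c (j + 1) := Sym2.mem_mk_right _ _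
  have hj2 : j + 1 + 1 = j + ((2 : ℕ) : ZMod b) := by push_cast; ring
  obtain rfl | hs2 := eq_or_ne s 2
  · exact absurd hv (vEdge_not_mem_of_mem_horizRows hM (hj2 ▸ hjs) hv')
  have hnext : vEdge c (j + 1 + 1) ∉ M := fun h =>
    ZMod.add_one_ne_self (j + 1) (vEdge_inj.1 (hM.eq_of_mem h hv (Sym2.mem_mk_left _ _) hv')).2
  have hend : j + 1 + 1 + ((s - 2 : ℕ) : ZMod b) = j + s := by
    push_cast [Nat.cast_sub (by omega : 2 ≤ s)]
    ring
  obtain ⟨k, hk⟩ := ih (s - 2) (by omega) hnext (by omega) (hend ▸ hjs)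
    (harc.mono_left (hj2 ▸ openArc_add_subset (by omega)))
  exact ⟨k + 1, by omega⟩

theorem exists_horizRows_eq_union {ε : ZMod a} (hε : ε = 1 ∨ ε = -1)
    (M : Set (Sym2 (ZMod a × ZMod b))) (g : ZMod a) :
    ∃ c, horizRows M c = rungs M g ∪ rungs M (g + ε) := by
  rcases hε with rfl | rfl
  · exact ⟨g + 1, by rw [horizRows, add_sub_cancel_right]⟩
  · exact ⟨g, by rw [horizRows, Set.union_comm, sub_eq_add_neg]⟩

/-- The rungs of `g` at rows `j` and `j + s` bound a stretch of columns `g` and `g + 1` in which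
every vertex is matched vertically. -/
structure IsClearArc (M : Set (Sym2 (ZMod a × ZMod b))) (g : ZMod a) (j : ZMod b) (s : ℕ) :
    Prop where
  pos : 0 < s
  lt : s < b
  left_mem : j ∈ rungs M g
  right_mem : j + s ∈ rungs M g
  disjoint_left : Disjoint (openArc j s) (horizRows M g)
  disjoint_right : Disjoint (openArc j s) (horizRows M (g + 1))

theorem odd_of_disjoint_openArc_union [Fact (2 < a)] [Fact (2 < b)] (hM : IsPM (torus a b) M)
    {ε : ZMod a} (hε : ε = 1 ∨ ε = -1) (g : ZMod a) :
    ∀ {j : ZMod b} {s : ℕ}, j ∈ rungs M g ∪ rungs M (g + ε) → 0 < s →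
      j + s ∈ rungs M g ∪ rungs M (g + ε) →
      Disjoint (openArc j s) (rungs M g ∪ rungs M (g + ε)) → Odd s := by
  intro j s hj hs hjs harc
  obtain ⟨c, hc⟩ := exists_horizRows_eq_union hε M g
  rw [← hc] at hj hjs harc
  exact odd_of_disjoint_openArc hM (vEdge_not_mem_of_mem_horizRows hM hj (Sym2.mem_mk_left _ _))
    hs hjs harc

theorem isClearArc_of_disjoint {ε : ZMod a} (hε : ε = 1 ∨ ε = -1) (hs : 0 < s) (hsb : s < b)
    (hj : j ∈ rungs M g) (hjs : j + s ∈ rungs M g)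
    (harc : Disjoint (openArc j s) (rungs M g ∪ rungs M (g + ε)))
    (harc' : Disjoint (openArc j s) (rungs M (g - ε))) : IsClearArc M g j s := by
  obtain ⟨hg, hgε⟩ := Set.disjoint_union_right.1 harc
  obtain ⟨hl, hr⟩ : Disjoint (openArc j s) (rungs M (g - 1)) ∧
      Disjoint (openArc j s) (rungs M (g + 1)) := by
    rcases hε with rfl | rfl
    · exact ⟨harc', hgε⟩
    · rw [sub_neg_eq_add] at harc'
      rw [← sub_eq_add_neg] at hgε
      exact ⟨hgε, harc'⟩
  refine ⟨hs, hsb, hj, hjs, Set.disjoint_union_right.2 ⟨hl, hg⟩, ?_⟩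
  rw [horizRows, add_sub_cancel_right]
  exact Set.disjoint_union_right.2 ⟨hg, hr⟩

/-- If the stretch between two consecutive rungs of `g` contains no rung of `g + ε` but some of
`g - ε`, the first two of the latter (there are at least two by parity) form a shorter such
configuration. -/
theorem exists_isClearArc_of_disjoint [Fact (2 < a)] [Fact (2 < b)] (hM : IsPM (torus a b) M)
    {ε : ZMod a} (hε : ε = 1 ∨ ε = -1) :
    ∀ {g : ZMod a} {j : ZMod b}, 0 < s → s < b → j ∈ rungs M g → j + s ∈ rungs M g →
      Disjoint (openArc j s) (rungs M g ∪ rungs M (g + ε)) → ∃ g j s, IsClearArc M g j s := by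
  induction s using Nat.strong_induction_on with
  | _ s ih =>
  intro g j hs hsb hj hjs harc
  by_cases hout : Disjoint (openArc j s) (rungs M (g - ε))
  · exact ⟨g, j, s, isClearArc_of_disjoint hε hs hsb hj hjs harc hout⟩
  have hodd := odd_of_disjoint_openArc_union hM hε g (.inl hj) hs (.inl hjs) harc
  have hodd' := @odd_of_disjoint_openArc_union _ _ _ _ _ hM _ hε (g - ε)
  rw [sub_add_cancel] at hodd'
  have hg := (Set.disjoint_union_right.1 harc).1
  obtain ⟨t, ht0, hts, htX, htarc⟩ := exists_first_mem_openArc hout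
  have hsub : openArc (j + (t : ZMod b)) (s - t) ⊆ openArc j s := openArc_add_subset (by omega)
  by_cases hout' : Disjoint (openArc (j + (t : ZMod b)) (s - t)) (rungs M (g - ε))
  · have hjt : j + t + ((s - t : ℕ) : ZMod b) = j + s := by
      push_cast [Nat.cast_sub hts.le]
      ring
    have h₁ : Odd t := hodd' (.inr hj) ht0 (.inl htX)
      (Set.disjoint_union_right.2 ⟨htarc, hg.mono_left (openArc_subset_openArc hts.le)⟩)
    have h₂ : Odd (s - t) := hodd' (.inl htX) (by omega) (hjt ▸ .inr hjs)
      (Set.disjoint_union_right.2 ⟨hout', hg.mono_left hsub⟩)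
    rw [Nat.odd_iff] at hodd h₁ h₂
    omega
  obtain ⟨u, hu0, hus, huX, huarc⟩ := exists_first_mem_openArc hout'
  refine ih u (by omega) hu0 (by omega) htX huX (Set.disjoint_union_right.2 ⟨huarc, ?_⟩)
  rw [sub_add_cancel]
  exact hg.mono_left ((openArc_subset_openArc hus.le).trans hsub)

theorem exists_isClearArc [Fact (2 < a)] [Fact (2 < b)] (hM : IsPM (torus a b) M) (hb : Odd b)
    (hne : ∀ g, (rungs M g).Nonempty) : ∃ g j s, IsClearArc M g j s := by
  obtain ⟨j, s, hs, hsb, harc, ⟨hj, hjs⟩ | ⟨hj, hjs⟩⟩ :=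
    ZMod.exists_consecutive_of_odd_ncard (disjoint_rungs_sub_one hM 0) (hne _) (hne _)
      (odd_ncard_horizRows hM hb 0)
  · exact exists_isClearArc_of_disjoint hM (.inl rfl) hs hsb hj hjs (by rwa [sub_add_cancel])
  · refine exists_isClearArc_of_disjoint hM (.inr rfl) hs hsb hj hjs ?_
    rwa [Set.union_comm, ← sub_eq_add_neg]

theorem IsClearArc.not_mem_horizRows (h : IsClearArc M g j s) {t : ℕ} (h0 : 0 < t)
    (hts : t < s) : j + t ∉ horizRows M g ∧ j + t ∉ horizRows M (g + 1) :=
  ⟨Set.disjoint_left.1 h.disjoint_left (add_mem_openArc h0 hts),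
    Set.disjoint_left.1 h.disjoint_right (add_mem_openArc h0 hts)⟩

theorem IsClearArc.odd [Fact (2 < a)] [Fact (2 < b)] (hM : IsPM (torus a b) M)
    (h : IsClearArc M g j s) : Odd s :=
  odd_of_disjoint_openArc hM (vEdge_not_mem_of_mem_horizRows hM
      (rungs_subset_horizRows g h.left_mem) (Sym2.mem_mk_left _ _)) h.pos
    (rungs_subset_horizRows g h.right_mem) h.disjoint_left

theorem IsClearArc.vEdge_add_one_mem [Fact (2 < a)] (hM : IsPM (torus a b) M)
    (h : IsClearArc M g j s) (hs : 1 < s) :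
    vEdge g (j + 1) ∈ M ∧ vEdge (g + 1) (j + 1) ∈ M := by
  have hrow := h.not_mem_horizRows one_pos hs
  rw [Nat.cast_one] at hrow
  exact ⟨Torus.vEdge_add_one_mem hM (vEdge_not_mem_of_mem_horizRows hM
      (rungs_subset_horizRows g h.left_mem) (Sym2.mem_mk_left _ _)) hrow.1,
    Torus.vEdge_add_one_mem hM (vEdge_not_mem_of_mem_horizRows hM
      (rungs_subset_horizRows_add_one g h.left_mem) (Sym2.mem_mk_left _ _)) hrow.2⟩

theorem IsClearArc.symmDiff_facialSquare [Fact (2 < a)] [Fact (2 < b)] (h : IsClearArc M g j s)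
    (hs : 3 ≤ s) (h₂ : hEdge g (j + 2) ∈ symmDiff M (facialSquare a b g (j + 1))) :
    IsClearArc (symmDiff (symmDiff M (facialSquare a b g (j + 1))) (facialSquare a b g j)) g
      (j + 2) (s - 2) := by
  set M₂ := symmDiff (symmDiff M (facialSquare a b g (j + 1))) (facialSquare a b g j)
  have hj2 : j + 1 + 1 = j + 2 := by ring
  have hrow : ∀ {t : ℕ}, t < b → t ≠ 0 → t ≠ 1 → t ≠ 2 → ∀ c : ZMod a,
      (j + t ∈ rungs M₂ c ↔ j + t ∈ rungs M c) ∧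
        (j + t ∈ horizRows M₂ c ↔ j + t ∈ horizRows M c) := by
    intro t htb ht₀ ht₁ ht₂ c
    have h₀ : j + t ≠ j := by
      simpa using j.add_natCast_ne_add_natCast htb (Nat.zero_lt_of_lt htb) ht₀
    have h₁ : j + t ≠ j + 1 := by
      simpa using j.add_natCast_ne_add_natCast htb (by have := (Fact.out : 2 < b); omega) ht₁
    have h₂ : j + t ≠ j + 1 + 1 := by
      simpa [hj2] using j.add_natCast_ne_add_natCast htb (Fact.out : 2 < b) ht₂
    exact ⟨(mem_rungs_symmDiff_facialSquare_iff h₀ h₁).trans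
        (mem_rungs_symmDiff_facialSquare_iff h₁ h₂),
      (mem_horizRows_symmDiff_facialSquare_iff h₀ h₁).trans
        (mem_horizRows_symmDiff_facialSquare_iff h₁ h₂)⟩
  have hshift : ∀ u : ℕ, j + 2 + (u : ZMod b) = j + ((u + 2 : ℕ) : ZMod b) := fun u => by
    push_cast
    ring
  have hlt := h.lt
  refine ⟨by omega, by omega, ?_, ?_, ?_, ?_⟩
  · refine (mem_rungs_symmDiff_facialSquare_iff (add_ne_left.2 ZMod.two_ne_zero) ?_).2 h₂
    exact hj2 ▸ ZMod.add_one_ne_self (j + 1)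
  · rw [hshift, Nat.sub_add_cancel (by omega)]
    exact ((hrow hlt (by omega) (by omega) (by omega) g).1).2 h.right_mem
  all_goals
    refine Set.disjoint_left.2 ?_
    rintro _ ⟨u, ⟨hu0, hus⟩, rfl⟩
    dsimp only
    rw [hshift, (hrow (by omega) (by omega) (by omega) (by omega) _).2]
  · exact (h.not_mem_horizRows (by omega) (by omega)).1
  · exact (h.not_mem_horizRows (by omega) (by omega)).2

/-- Flipping the squares at rows `j + 1` and then `j` moves the lower rung up by two rows. -/
theorem IsClearArc.exists_reflTransGen_ncard_eq [Fact (2 < a)] [Fact (2 < b)]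
    (hM : IsPM (torus a b) M) (h : IsClearArc M g j s) (hs : 3 ≤ s) :
    ∃ M₂, Relation.ReflTransGen (IsFlip a b) M M₂ ∧
      (M₂ ∩ horizontalEdges).ncard = (M ∩ horizontalEdges).ncard ∧
      IsClearArc M₂ g (j + 2) (s - 2) := by
  obtain ⟨hv₀, hv₁⟩ := h.vEdge_add_one_mem hM (by omega)
  have hj2 : j + 1 + 1 = j + 2 := by ring
  have hrow₁ := h.not_mem_horizRows (t := 1) one_pos (by omega)
  have hrow₂ := h.not_mem_horizRows (t := 2) two_pos (by omega)
  rw [Nat.cast_one] at hrow₁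
  rw [Nat.cast_ofNat, ← hj2] at hrow₂
  have hnot₁ : hEdge g (j + 1) ∉ M := fun h' => hrow₁.1 (rungs_subset_horizRows g h')
  have hnot₂ : hEdge g (j + 1 + 1) ∉ M := fun h' => hrow₂.1 (rungs_subset_horizRows g h')
  set M₁ := symmDiff M (facialSquare a b g (j + 1))
  have hflip₁ : IsFlip a b M M₁ := isFlip_of_vEdge_mem hM hv₀ hv₁
  have hj₀ : hEdge g j ∈ M₁ := by
    refine (mem_rungs_symmDiff_facialSquare_iff (ZMod.add_one_ne_self j).symm ?_).2 h.left_mem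
    exact fun h' => ZMod.two_ne_zero (n := b) (by linear_combination -h')
  have hj₁ : hEdge g (j + 1) ∈ M₁ := Set.mem_symmDiff.2 (.inr ⟨.inl rfl, hnot₁⟩)
  have hj₂ : hEdge g (j + 1 + 1) ∈ M₁ := Set.mem_symmDiff.2 (.inr ⟨.inr (.inr (.inl rfl)), hnot₂⟩)
  have hflip₂ := isFlip_of_hEdge_mem hflip₁.2.1 hj₀ hj₁
  refine ⟨_, .head hflip₁ (.single hflip₂), ?_, h.symmDiff_facialSquare hs (hj2 ▸ hj₂)⟩
  have h₁ : (M₁ ∩ horizontalEdges).ncard = (M ∩ horizontalEdges).ncard + 2 :=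
    ncard_symmDiff_inter_horizontalEdges_of_vEdge hnot₁ hnot₂
  have h₂ := ncard_symmDiff_inter_horizontalEdges_of_hEdge hj₀ hj₁
  omega

/-- Once the two rungs are adjacent, a last flip removes both. -/
theorem IsClearArc.exists_reflTransGen_ncard_lt [Fact (2 < a)] [Fact (2 < b)] :
    ∀ {M : Set (Sym2 (ZMod a × ZMod b))} {j : ZMod b}, IsPM (torus a b) M →
      IsClearArc M g j s → ∃ M', Relation.ReflTransGen (IsFlip a b) M M' ∧
        (M' ∩ horizontalEdges).ncard < (M ∩ horizontalEdges).ncard := by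
  induction s using Nat.strong_induction_on with
  | _ s ih =>
  intro M j hM h
  obtain rfl | hs1 := eq_or_ne s 1
  · have h₀ : hEdge g j ∈ M := h.left_mem
    have h₁ : j + 1 ∈ rungs M g := by simpa using h.right_mem
    have := ncard_symmDiff_inter_horizontalEdges_of_hEdge h₀ h₁
    exact ⟨_, .single (isFlip_of_hEdge_mem hM h₀ h₁), by omega⟩
  have hs3 : 3 ≤ s := by
    obtain ⟨k, rfl⟩ := h.odd hM
    omega
  obtain ⟨M₂, hreach, hcount, h₂⟩ := h.exists_reflTransGen_ncard_eq hM hs3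
  obtain ⟨M', hreach', hlt⟩ := ih (s - 2) (by omega) (isPM_of_reflTransGen hreach hM) h₂
  exact ⟨M', hreach.trans hreach', hcount ▸ hlt⟩

theorem exists_reflTransGen_rungs_eq_empty [Fact (2 < a)] [Fact (2 < b)] (hb : Odd b)
    (hM : IsPM (torus a b) M) :
    ∃ M', Relation.ReflTransGen (IsFlip a b) M M' ∧ ∃ g, rungs M' g = ∅ := by
  induction hk : (M ∩ horizontalEdges).ncard using Nat.strong_induction_on generalizing M with
  | _ k ih =>
  by_cases hgap : ∃ g, rungs M g = ∅
  · exact ⟨M, .refl, hgap⟩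
  obtain ⟨g, j, s, harc⟩ :=
    exists_isClearArc hM hb fun g => Set.nonempty_iff_ne_empty.2 fun h => hgap ⟨g, h⟩
  obtain ⟨M₁, hreach, hlt⟩ := harc.exists_reflTransGen_ncard_lt hM
  obtain ⟨M', hreach', hgap'⟩ := ih _ (hk ▸ hlt) (isPM_of_reflTransGen hreach hM) rfl
  exact ⟨M', hreach.trans hreach', hgap'⟩

end Torus

/-- every perfect matching of the torus can be transformed by flips into a
perfect matching avoiding all horizontal edges between some pair of consecutive columns. -/
theorem stmt_12 (n m : ℕ) (hn : 1 ≤ n) (hm : 2 ≤ m)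
    (M : Set (Sym2 (ZMod (2*m) × ZMod (2*n+1)))) (hM : IsPM (torus (2*m) (2*n+1)) M) :
    ∃ M' : Set (Sym2 (ZMod (2*m) × ZMod (2*n+1))),
      Relation.ReflTransGen (TorusFlip m n) M M' ∧
      ∃ i : ZMod (2*m), M' ∩ colEdges (2*m) (2*n+1) i = ∅ := by
  have : Fact (2 < 2 * m) := ⟨by omega⟩
  have : Fact (2 < 2 * n + 1) := ⟨by omega⟩
  obtain ⟨M', hreach, i, hi⟩ := Torus.exists_reflTransGen_rungs_eq_empty ⟨n, by ring⟩ hM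
  refine ⟨M', hreach, i, Set.eq_empty_iff_forall_notMem.2 ?_⟩
  rintro _ ⟨he, j, rfl⟩
  exact Set.eq_empty_iff_forall_notMem.1 hi j he
end

section
/- For n ≥ 1, the minimum forcing number of the prism over an odd cycle, G = C_{2n+1} □ K₂, equals ⌈(2n+1)/3⌉: there exists a perfect matching M with f(G,M) = ⌈(2n+1)/3⌉ and every perfect matching M' satisfies f(G,M') ≥ ⌈(2n+1)/3⌉. -/
open SimpleGraph

variable {V : Type*}

/-!
In a perfect matching `M` of the prism, rails come in parallel pairs: a rail without its
partner forces the matching to zigzag between the two rails, and after going once around the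
odd cycle it arrives on the wrong rail. So `M` is a cyclic sequence of blocks (two parallel
rails) and rungs, and its alternating squares are its blocks and its pairs of adjacent rungs;
`S ⊆ M` forces `M` exactly when it meets all of them. Then for every column `c` some edge of
`S` meets column `c` or `c + 1`, and an edge does so for at most three `c`, whence
`3 |S| ≥ 2n + 1`. Conversely, blocks at the columns `0, 3, 6, …` give a matching forced by one
edge at each column divisible by `3`.
-/

section Matchings

variable {G : SimpleGraph V} {M M' S A B : Set (Sym2 V)}

theorem IsPM.eq_of_mem_of_mem (hM : IsPM G M) {e e' : Sym2 V} {v : V}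
    (he : e ∈ M) (he' : e' ∈ M) (hv : v ∈ e) (hv' : v ∈ e') : e = e' :=
  (hM.2 v).unique ⟨he, hv⟩ ⟨he', hv'⟩

theorem IsPM.eq_of_subset (hM : IsPM G M) (hM' : IsPM G M') (h : M ⊆ M') : M' = M := by
  refine (Set.Subset.antisymm h fun e he => ?_).symm
  induction e with
  | _ v w =>
    obtain ⟨f, ⟨hf, hvf⟩, -⟩ := hM.2 v
    rwa [hM'.eq_of_mem_of_mem he (h hf) (Sym2.mem_mk_left v w) hvf]

theorem IsPM.isForcingSet_self_s17 (hM : IsPM G M) : IsForcingSet G M M :=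
  ⟨subset_rfl, fun _ hM' h => hM.eq_of_subset hM' h⟩

theorem IsPM.diff_union (hM : IsPM G M) (hA : A ⊆ M) (hB : B ⊆ G.edgeSet)
    (hBM : ∀ v, {f | f ∈ B ∧ v ∈ f}.Subsingleton) (hAB : edgeVerts A = edgeVerts B) :
    IsPM G (M \ A ∪ B) := by
  refine ⟨Set.union_subset (Set.sdiff_subset.trans hM.1) hB, fun v => ?_⟩
  by_cases hv : v ∈ edgeVerts B
  · obtain ⟨f, hf, hvf⟩ := hv
    refine ⟨f, ⟨Or.inr hf, hvf⟩, ?_⟩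
    rintro g ⟨⟨hgM, hgA⟩ | hgB, hvg⟩
    · obtain ⟨a, ha, hva⟩ : v ∈ edgeVerts A := hAB ▸ ⟨f, hf, hvf⟩
      exact absurd (hM.eq_of_mem_of_mem hgM (hA ha) hvg hva ▸ ha) hgA
    · exact hBM v ⟨hgB, hvg⟩ ⟨hf, hvf⟩
  · obtain ⟨g, ⟨hgM, hvg⟩, hg⟩ := hM.2 v
    have hgA : g ∉ A := fun hgA => hv (hAB ▸ ⟨g, hgA, hvg⟩)
    refine ⟨g, ⟨Or.inl ⟨hgM, hgA⟩, hvg⟩, ?_⟩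
    rintro g' ⟨⟨hg'M, -⟩ | hg'B, hvg'⟩
    · exact hg g' ⟨hg'M, hvg'⟩
    · exact absurd ⟨g', hg'B, hvg'⟩ hv

theorem IsForcingSet.exists_mem_of_diff_union (hS : IsForcingSet G M S) (hM : IsPM G M)
    (hA : A ⊆ M) (hB : B ⊆ G.edgeSet) (hBM : ∀ v, {f | f ∈ B ∧ v ∈ f}.Subsingleton)
    (hAB : edgeVerts A = edgeVerts B) {f : Sym2 V} (hfB : f ∈ B) (hfM : f ∉ M) :
    ∃ e ∈ S, e ∈ A := by
  by_contra! hSA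
  have hSsub : S ⊆ M \ A ∪ B := fun e he => Or.inl ⟨hS.1 he, hSA e he⟩
  have := hS.2 _ (hM.diff_union hA hB hBM hAB) hSsub
  exact hfM (this ▸ Or.inr hfB)

theorem forcingNumber_le (hS : IsForcingSet G M S) : forcingNumber G M ≤ S.ncard :=
  Nat.sInf_le ⟨S, hS, rfl⟩

theorem le_forcingNumber {k : ℕ} (hM : IsPM G M)
    (h : ∀ S, IsForcingSet G M S → k ≤ S.ncard) : k ≤ forcingNumber G M :=
  le_csInf ⟨_, M, hM.isForcingSet_self_s17, rfl⟩ fun _ ⟨S, hS, hk⟩ => hk ▸ h S hS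

end Matchings

namespace prism

variable {n : ℕ}

abbrev Col (n : ℕ) := ZMod (2*n+1)

def rung (c : Col n) : Sym2 (Col n × Bool) := s((c, false), (c, true))

def rail (c : Col n) (b : Bool) : Sym2 (Col n × Bool) := s((c, b), (c + 1, b))

@[simp] theorem mem_rung {x : Col n × Bool} {c : Col n} : x ∈ rung c ↔ x.1 = c := by
  obtain ⟨x, (_ | _)⟩ := x <;> simp [rung]

@[simp] theorem mem_rail {x : Col n × Bool} {c : Col n} {b : Bool} :
    x ∈ rail c b ↔ x = (c, b) ∨ x = (c + 1, b) := by
  simp [rail]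

theorem col_one_ne_zero (hn : 1 ≤ n) : (1 : Col n) ≠ 0 := by
  have : Fact (1 < 2*n+1) := ⟨by omega⟩
  exact one_ne_zero

theorem col_two_ne_zero (hn : 1 ≤ n) : (2 : Col n) ≠ 0 := by
  have h := (ZMod.natCast_eq_zero_iff 2 (2*n+1)).not.mpr fun h => by
    have := Nat.le_of_dvd (by norm_num) h; omega
  exact_mod_cast h

theorem add_one_ne_self (hn : 1 ≤ n) (c : Col n) : c + 1 ≠ c := by
  simpa using col_one_ne_zero hn

-- `ZMod (2*n+1)` is definitionally `Fin (2*n+1)`.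
theorem val_add_one (c : Col n) : (c + 1).val = c.val + 1 ∨ c.val = 2*n ∧ (c + 1).val = 0 := by
  have h := Fin.val_add_one (n := 2*n) c
  split_ifs at h with hc
  · exact Or.inr ⟨congrArg Fin.val hc, h⟩
  · exact Or.inl h

theorem rung_injective : Function.Injective (rung (n := n)) := by
  intro c d h
  simpa using (mem_rung (x := (c, false))).mp (h ▸ mem_rung.mpr rfl)

theorem rung_ne_rail (c d : Col n) (b : Bool) : rung c ≠ rail d b := by
  intro h
  have := (mem_rail.mp (h ▸ (mem_rung (x := (c, !b))).mpr rfl))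
  simp [Prod.ext_iff] at this

theorem rail_inj (hn : 1 ≤ n) {c d : Col n} {b b' : Bool} :
    rail c b = rail d b' ↔ c = d ∧ b = b' := by
  refine ⟨fun h => ?_, fun ⟨hc, hb⟩ => hc ▸ hb ▸ rfl⟩
  rcases Sym2.eq_iff.mp h with ⟨h1, -⟩ | ⟨h1, h2⟩
  · simpa [Prod.ext_iff] using h1
  · simp only [Prod.ext_iff] at h1 h2
    refine absurd ?_ (col_two_ne_zero hn)
    linear_combination h2.1 - h1.1

theorem rung_mem_edgeSet (c : Col n) : rung c ∈ (prism n).edgeSet := by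
  simp [rung, prism]

theorem rail_mem_edgeSet (hn : 1 ≤ n) (c : Col n) (b : Bool) :
    rail c b ∈ (prism n).edgeSet := by
  simp [rail, prism, col_one_ne_zero hn]

theorem eq_rung_or_eq_rail {e : Sym2 (Col n × Bool)} (he : e ∈ (prism n).edgeSet)
    {x : Col n × Bool} (hx : x ∈ e) :
    e = rung x.1 ∨ e = rail x.1 x.2 ∨ e = rail (x.1 - 1) x.2 := by
  obtain ⟨y, rfl⟩ := Sym2.mem_iff_exists.mp hx
  obtain ⟨c, b⟩ := x
  obtain ⟨d, b'⟩ := y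
  simp only [mem_edgeSet, prism, fromRel_adj] at he
  rcases he.2 with (⟨rfl, hb⟩ | ⟨rfl, rfl⟩) | (⟨rfl, hb⟩ | ⟨rfl, rfl⟩)
  · left; cases b <;> cases b' <;> simp_all [rung, Sym2.eq_swap]
  · right; left; rfl
  · left; cases b <;> cases b' <;> simp_all [rung, Sym2.eq_swap]
  · right; right; simp [rail, Sym2.eq_swap]

section PerfectMatching

variable {M : Set (Sym2 (Col n × Bool))}

theorem rung_mem_or_rail_mem (hM : IsPM (prism n) M) (x : Col n × Bool) :
    rung x.1 ∈ M ∨ rail x.1 x.2 ∈ M ∨ rail (x.1 - 1) x.2 ∈ M := by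
  obtain ⟨e, ⟨he, hx⟩, -⟩ := hM.2 x
  rcases eq_rung_or_eq_rail (hM.1 he) hx with rfl | rfl | rfl <;> simp [he]

theorem rung_notMem_of_rail_mem (hM : IsPM (prism n) M) {c : Col n} {b : Bool}
    (h : rail c b ∈ M) : rung c ∉ M := fun h' =>
  rung_ne_rail c c b (hM.eq_of_mem_of_mem h' h (v := (c, b)) (by simp) (by simp))

theorem rung_add_one_notMem_of_rail_mem (hM : IsPM (prism n) M) {c : Col n} {b : Bool}
    (h : rail c b ∈ M) : rung (c + 1) ∉ M := fun h' =>
  rung_ne_rail _ c b (hM.eq_of_mem_of_mem h' h (v := (c + 1, b)) (by simp) (by simp))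

theorem rail_add_one_notMem_of_rail_mem (hn : 1 ≤ n) (hM : IsPM (prism n) M) {c : Col n}
    {b : Bool} (h : rail c b ∈ M) : rail (c + 1) b ∉ M := fun h' =>
  add_one_ne_self hn c ((rail_inj hn).mp
    (hM.eq_of_mem_of_mem h' h (v := (c + 1, b)) (by simp) (by simp))).1

/-- If a perfect matching used a rail edge without its parallel one, the matching would be
forced to zigzag between the two rails all the way around the odd cycle. -/
theorem parallel_rail_mem (hn : 1 ≤ n) (hM : IsPM (prism n) M) {c : Col n} {b : Bool}
    (h : rail c b ∈ M) : rail c (!b) ∈ M := by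
  let Zigzag (c : Col n) (b : Bool) : Prop := rail c b ∈ M ∧ rail c (!b) ∉ M
  have step : ∀ c b, Zigzag c b → Zigzag (c + 1) (!b) := by
    rintro c b ⟨hb, hnb⟩
    refine ⟨?_, by simpa using rail_add_one_notMem_of_rail_mem hn hM hb⟩
    rcases rung_mem_or_rail_mem hM (c + 1, !b) with h | h | h
    · exact absurd h (rung_add_one_notMem_of_rail_mem hM hb)
    · exact h
    · simp only [add_sub_cancel_right] at h
      exact absurd h hnb
  by_contra hnb
  have hk : ∀ k : ℕ, Zigzag (c + 2 * k) b := by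
    intro k
    induction k with
    | zero => simpa using And.intro h hnb
    | succ k ih =>
      have hk : c + 2 * ((k + 1 : ℕ) : Col n) = c + 2 * k + 1 + 1 := by push_cast; ring
      rw [hk]
      simpa using step _ _ (step _ _ ih)
  have hc : c + 2 * n + 1 = c := by
    have h0 := ZMod.natCast_self (2 * n + 1)
    push_cast at h0
    linear_combination h0
  obtain ⟨-, hb⟩ := step _ _ (hk n)
  rw [hc, Bool.not_not] at hb
  exact hb h

end PerfectMatching

/-- `S` meets every `M`-alternating square `rung c, rail c false, rung (c + 1), rail c true`. -/
def MeetsAltSquares (M S : Set (Sym2 (Col n × Bool))) : Prop :=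
  (∀ c, rail c false ∈ M → rail c false ∈ S ∨ rail c true ∈ S) ∧
    ∀ c, rung c ∈ M → rung (c + 1) ∈ M → rung c ∈ S ∨ rung (c + 1) ∈ S

section Forcing

variable {M S : Set (Sym2 (Col n × Bool))}

theorem edgeVerts_rails_eq_edgeVerts_rungs (c : Col n) :
    edgeVerts {rail c false, rail c true} = edgeVerts {rung c, rung (c + 1)} := by
  ext ⟨d, b⟩
  cases b <;> simp [edgeVerts, or_comm]

theorem rungs_subsingleton (hn : 1 ≤ n) (c : Col n) (v : Col n × Bool) :
    {f | f ∈ ({rung c, rung (c + 1)} : Set _) ∧ v ∈ f}.Subsingleton := by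
  rintro f ⟨rfl | rfl, hf⟩ f' ⟨rfl | rfl, hf'⟩ <;> simp_all [add_one_ne_self hn]

theorem rails_subsingleton (c : Col n) (v : Col n × Bool) :
    {f | f ∈ ({rail c false, rail c true} : Set _) ∧ v ∈ f}.Subsingleton := by
  rintro f ⟨rfl | rfl, hf⟩ f' ⟨rfl | rfl, hf'⟩ <;>
    simp only [mem_rail, Prod.ext_iff] at hf hf' <;> grind

theorem meetsAltSquares_of_isForcingSet (hn : 1 ≤ n) (hM : IsPM (prism n) M)
    (hS : IsForcingSet (prism n) M S) : MeetsAltSquares M S := by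
  constructor
  · intro c hc
    obtain ⟨e, heS, rfl | rfl⟩ := hS.exists_mem_of_diff_union hM
      (Set.insert_subset hc (by simpa using parallel_rail_mem hn hM hc))
      (Set.insert_subset (rung_mem_edgeSet c) (by simpa using rung_mem_edgeSet (c + 1)))
      (rungs_subsingleton hn c) (edgeVerts_rails_eq_edgeVerts_rungs c)
      (Set.mem_insert _ _) (rung_notMem_of_rail_mem hM hc)
    exacts [Or.inl heS, Or.inr heS]
  · intro c hc hc'
    obtain ⟨e, heS, rfl | rfl⟩ := hS.exists_mem_of_diff_union hM
      (Set.insert_subset hc (by simpa using hc'))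
      (Set.insert_subset (rail_mem_edgeSet hn c false) (by simpa using rail_mem_edgeSet hn c true))
      (rails_subsingleton c) (edgeVerts_rails_eq_edgeVerts_rungs c).symm
      (Set.mem_insert _ _) (fun h => rung_notMem_of_rail_mem hM h hc)
    exacts [Or.inl heS, Or.inr heS]

theorem rail_mem_of_meetsAltSquares (hn : 1 ≤ n) (hM : IsPM (prism n) M)
    (hS : MeetsAltSquares M S) {M' : Set (Sym2 (Col n × Bool))} (hM' : IsPM (prism n) M')
    (hSM' : S ⊆ M') {c : Col n} {b : Bool} (h : rail c b ∈ M) : rail c b ∈ M' := by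
  have parallel : ∀ b', rail c b' ∈ M' → rail c b ∈ M' := fun b' h' => by
    obtain rfl | rfl := Bool.eq_or_eq_not b b'
    exacts [h', parallel_rail_mem hn hM' h']
  have hfalse : rail c false ∈ M := by
    obtain rfl | rfl := Bool.eq_or_eq_not b true
    exacts [by simpa using parallel_rail_mem hn hM h, h]
  rcases hS.1 c hfalse with h | h
  exacts [parallel _ (hSM' h), parallel _ (hSM' h)]

theorem rung_mem_of_meetsAltSquares (hn : 1 ≤ n) (hM : IsPM (prism n) M)
    (hS : MeetsAltSquares M S) {M' : Set (Sym2 (Col n × Bool))} (hM' : IsPM (prism n) M')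
    (hSM' : S ⊆ M') {c : Col n} (hc : rung c ∈ M) : rung c ∈ M' := by
  by_cases hcS : rung c ∈ S
  · exact hSM' hcS
  -- `M'` matches `(c + 1, false)` and `(c - 1, false)` as `M` does, leaving only the rung for
  -- `(c, false)`.
  have hnext : ∃ e ∈ M, e ∈ M' ∧ (c + 1, false) ∈ e := by
    rcases rung_mem_or_rail_mem hM (c + 1, false) with h | h | h
    · exact ⟨_, h, hSM' ((hS.2 c hc h).resolve_left hcS), by simp⟩
    · exact ⟨_, h, rail_mem_of_meetsAltSquares hn hM hS hM' hSM' h, by simp⟩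
    · simp only [add_sub_cancel_right] at h
      exact absurd hc (rung_notMem_of_rail_mem hM h)
  have hprev : ∃ e ∈ M, e ∈ M' ∧ (c - 1, false) ∈ e := by
    rcases rung_mem_or_rail_mem hM (c - 1, false) with h | h | h
    · have := hS.2 (c - 1) h (by simpa using hc)
      simp only [sub_add_cancel] at this
      exact ⟨_, h, hSM' (this.resolve_right hcS), by simp⟩
    · exact absurd hc (by simpa using rung_add_one_notMem_of_rail_mem hM h)
    · exact ⟨_, h, rail_mem_of_meetsAltSquares hn hM hS hM' hSM' h, by simp⟩
  rcases rung_mem_or_rail_mem hM' (c, false) with h | h | h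
  · exact h
  · obtain ⟨e, heM, heM', he⟩ := hnext
    rw [← hM'.eq_of_mem_of_mem h heM' (by simp) he] at heM
    exact absurd hc (rung_notMem_of_rail_mem hM heM)
  · obtain ⟨e, heM, heM', he⟩ := hprev
    rw [← hM'.eq_of_mem_of_mem h heM' (by simp) he] at heM
    exact absurd hc (by simpa using rung_add_one_notMem_of_rail_mem hM heM)

theorem isForcingSet_iff (hn : 1 ≤ n) (hM : IsPM (prism n) M) :
    IsForcingSet (prism n) M S ↔ S ⊆ M ∧ MeetsAltSquares M S := by
  refine ⟨fun hS => ⟨hS.1, meetsAltSquares_of_isForcingSet hn hM hS⟩,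
    fun ⟨hSM, hS⟩ => ⟨hSM, ?_⟩⟩
  refine fun M' hM' hSM' => hM.eq_of_subset hM' fun e he => ?_
  obtain ⟨x, hx⟩ : ∃ x, x ∈ e := ⟨_, Sym2.out_fst_mem e⟩
  rcases eq_rung_or_eq_rail (hM.1 he) hx with rfl | rfl | rfl
  · exact rung_mem_of_meetsAltSquares hn hM hS hM' hSM' he
  all_goals exact rail_mem_of_meetsAltSquares hn hM hS hM' hSM' he

end Forcing

def Touches (c : Col n) (e : Sym2 (Col n × Bool)) : Prop := ∃ x ∈ e, x.1 = c ∨ x.1 = c + 1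

section LowerBound

variable {M S : Set (Sym2 (Col n × Bool))}

theorem exists_touches_of_meetsAltSquares (hM : IsPM (prism n) M) (hS : MeetsAltSquares M S)
    (c : Col n) : ∃ e ∈ S, Touches c e := by
  rcases rung_mem_or_rail_mem hM (c, false) with hc | hc | hc
  · rcases rung_mem_or_rail_mem hM (c + 1, false) with h | h | h
    · rcases hS.2 c hc h with h' | h'
      exacts [⟨_, h', (c, false), by simp⟩, ⟨_, h', (c + 1, false), by simp⟩]
    · rcases hS.1 _ h with h' | h'
      exacts [⟨_, h', (c + 1, false), by simp⟩, ⟨_, h', (c + 1, true), by simp⟩]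
    · simp only [add_sub_cancel_right] at h
      exact absurd hc (rung_notMem_of_rail_mem hM h)
  · rcases hS.1 c hc with h' | h'
    exacts [⟨_, h', (c, false), by simp⟩, ⟨_, h', (c, true), by simp⟩]
  · rcases hS.1 _ hc with h' | h'
    exacts [⟨_, h', (c, false), by simp⟩, ⟨_, h', (c, true), by simp⟩]

theorem exists_window_of_mem_edgeSet {e : Sym2 (Col n × Bool)} (he : e ∈ (prism n).edgeSet) :
    ∃ d, ∀ c, Touches c e → c ∈ ({d - 1, d, d + 1} : Finset (Col n)) := by
  obtain ⟨x, hx⟩ : ∃ x, x ∈ e := ⟨_, Sym2.out_fst_mem e⟩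
  have key : ∀ d b, e = rung d ∨ e = rail d b →
      ∀ c, Touches c e → c ∈ ({d - 1, d, d + 1} : Finset (Col n)) := by
    rintro d b (rfl | rfl) c ⟨y, hy, h | h⟩
    all_goals
      simp only [mem_rung, mem_rail, Finset.mem_insert, Finset.mem_singleton] at hy ⊢
      grind
  rcases eq_rung_or_eq_rail he hx with h | h | h
  exacts [⟨_, key _ x.2 (.inl h)⟩, ⟨_, key _ x.2 (.inr h)⟩, ⟨_, key _ x.2 (.inr h)⟩]

theorem two_mul_add_one_le_three_mul_ncard (hM : IsPM (prism n) M)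
    (hSM : S ⊆ M) (hS : MeetsAltSquares M S) : 2 * n + 1 ≤ 3 * S.ncard := by
  classical
  have h := Finset.card_mul_le_card_mul (fun c e => Touches c e)
    (s := Finset.univ) (t := S.toFinset) (m := 1) (n := 3)
    (fun c _ => by
      obtain ⟨e, he, hce⟩ := exists_touches_of_meetsAltSquares hM hS c
      exact Finset.card_pos.mpr ⟨e, by simpa [Finset.mem_bipartiteAbove] using ⟨he, hce⟩⟩)
    (fun e he => by
      obtain ⟨d, hd⟩ := exists_window_of_mem_edgeSet (hM.1 (hSM (Set.mem_toFinset.mp he)))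
      refine (Finset.card_le_card fun c hc => hd c ?_).trans Finset.card_le_three
      exact (Finset.mem_bipartiteBelow _).mp hc |>.2)
  rw [Set.ncard_eq_toFinset_card']
  simpa [mul_comm] using h

end LowerBound

section Witness

/-- `B c` marks the first column of a block of two parallel rails. -/
def blockMatching (B : Col n → Prop) : Set (Sym2 (Col n × Bool)) :=
  {e | ∃ c b, B c ∧ e = rail c b} ∪ {e | ∃ c, ¬B c ∧ ¬B (c - 1) ∧ e = rung c}

variable {B : Col n → Prop}

theorem rail_mem_blockMatching (hn : 1 ≤ n) {c : Col n} {b : Bool} :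
    rail c b ∈ blockMatching B ↔ B c := by
  simp only [blockMatching, Set.mem_union, Set.mem_ofPred_eq, rail_inj hn,
    (rung_ne_rail _ _ _).symm, and_false, exists_false, or_false]
  exact ⟨fun ⟨d, b', hd, hcd, _⟩ => hcd ▸ hd, fun h => ⟨c, b, h, rfl, rfl⟩⟩

theorem rung_mem_blockMatching {c : Col n} :
    rung c ∈ blockMatching B ↔ ¬B c ∧ ¬B (c - 1) := by
  simp [blockMatching, rung_ne_rail, rung_injective.eq_iff]

theorem isPM_blockMatching (hn : 1 ≤ n) (hB : ∀ c, B c → ¬B (c + 1)) :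
    IsPM (prism n) (blockMatching B) := by
  have hsub : blockMatching B ⊆ (prism n).edgeSet := by
    rintro e (⟨c, b, -, rfl⟩ | ⟨c, -, -, rfl⟩)
    exacts [rail_mem_edgeSet hn c b, rung_mem_edgeSet c]
  refine ⟨hsub, fun ⟨c, b⟩ => ?_⟩
  have hexcl : ¬(B (c - 1) ∧ B c) := fun h => hB _ h.1 (by simpa using h.2)
  have cand : ∀ e ∈ blockMatching B, (c, b) ∈ e →
      (e = rung c ∧ ¬B c ∧ ¬B (c - 1)) ∨ (e = rail c b ∧ B c) ∨
        (e = rail (c - 1) b ∧ B (c - 1)) := by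
    intro e he hv
    rcases eq_rung_or_eq_rail (hsub he) hv with rfl | rfl | rfl
    · exact .inl ⟨rfl, rung_mem_blockMatching.mp he⟩
    · exact .inr (.inl ⟨rfl, (rail_mem_blockMatching hn).mp he⟩)
    · exact .inr (.inr ⟨rfl, (rail_mem_blockMatching hn).mp he⟩)
  refine existsUnique_of_exists_of_unique ?_ fun e e' ⟨he, hv⟩ ⟨he', hv'⟩ => ?_
  · by_cases hc : B c
    · exact ⟨_, (rail_mem_blockMatching hn (b := b)).mpr hc, by simp⟩
    by_cases hc' : B (c - 1)
    · exact ⟨_, (rail_mem_blockMatching hn (b := b)).mpr hc', by simp⟩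
    · exact ⟨_, rung_mem_blockMatching.mpr ⟨hc, hc'⟩, by simp⟩
  rcases cand e he hv with ⟨rfl, h⟩ | ⟨rfl, h⟩ | ⟨rfl, h⟩ <;>
    rcases cand e' he' hv' with ⟨rfl, h'⟩ | ⟨rfl, h'⟩ | ⟨rfl, h'⟩ <;> tauto

/-- Blocks start at the columns `0, 3, 6, …`, except at the last column `2n`, which is a rung. -/
def blockStart (n : ℕ) (c : Col n) : Prop := c.val % 3 = 0 ∧ c.val ≠ 2 * n

instance : DecidablePred (blockStart n) := fun _ => inferInstanceAs (Decidable (_ ∧ _))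

def witnessForcingSet (n : ℕ) : Set (Sym2 (Col n × Bool)) :=
  (fun c => if blockStart n c then rail c false else rung c) '' {c | c.val % 3 = 0}

theorem blockStart_not_add_one (c : Col n) (hc : blockStart n c) : ¬blockStart n (c + 1) := by
  unfold blockStart at *
  have := val_add_one c
  omega

theorem witnessForcingSet_subset (hn : 1 ≤ n) :
    witnessForcingSet n ⊆ blockMatching (blockStart n) := by
  rintro _ ⟨c, hc, rfl⟩
  dsimp only
  split_ifs with hB
  · exact (rail_mem_blockMatching hn).mpr hB
  refine rung_mem_blockMatching.mpr ⟨hB, ?_⟩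
  unfold blockStart at *
  have := val_add_one (c - 1)
  rw [sub_add_cancel] at this
  simp only [Set.mem_ofPred_eq] at hc
  omega

theorem meetsAltSquares_witness (hn : 1 ≤ n) :
    MeetsAltSquares (blockMatching (blockStart n)) (witnessForcingSet n) := by
  constructor
  · intro c hc
    refine .inl ⟨c, ((rail_mem_blockMatching hn).mp hc).1, ?_⟩
    simp [(rail_mem_blockMatching hn).mp hc]
  · intro c hc hc'
    obtain ⟨h1, h2⟩ := rung_mem_blockMatching.mp hc
    obtain ⟨h3, -⟩ := rung_mem_blockMatching.mp hc'
    refine .inr ⟨c + 1, ?_, by simp [h3]⟩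
    unfold blockStart at *
    have := ZMod.val_lt (c + 1 : Col n)
    have := val_add_one c
    have := val_add_one (c - 1)
    rw [sub_add_cancel] at this
    simp only [Set.mem_ofPred_eq]
    grind

theorem ncard_witnessForcingSet_le : (witnessForcingSet n).ncard ≤ (2 * n + 1 + 2) / 3 := by
  refine (Set.ncard_image_le).trans ?_
  calc {c : Col n | c.val % 3 = 0}.ncard
      ≤ (Finset.range ((2 * n + 1 + 2) / 3) : Set ℕ).ncard := by
        refine Set.ncard_le_ncard_of_injOn (fun c => c.val / 3) (fun c hc => ?_) ?_
        · have := ZMod.val_lt c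
          simp only [Set.mem_ofPred_eq] at hc
          simp only [Finset.coe_range, Set.mem_Iio]
          omega
        · intro c hc d hd h
          simp only [Set.mem_ofPred_eq] at hc hd h
          exact ZMod.val_injective _ (by omega)
    _ = (2 * n + 1 + 2) / 3 := by simp

end Witness

end prism

/-- the minimum forcing number of `C_{2n+1} □ K₂` equals `⌈(2n+1)/3⌉`
(written here as `(2n+3)/3` in natural division): some perfect matching attains it and
every perfect matching has forcing number at least this value. -/
theorem stmt_17 (n : ℕ) (hn : 1 ≤ n) :
    (∃ M : Set (Sym2 (ZMod (2*n+1) × Bool)), IsPM (prism n) M ∧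
        forcingNumber (prism n) M = (2*n+1+2)/3) ∧
    ∀ M : Set (Sym2 (ZMod (2*n+1) × Bool)), IsPM (prism n) M →
        (2*n+1+2)/3 ≤ forcingNumber (prism n) M := by
  have lower : ∀ M, IsPM (prism n) M → (2*n+1+2)/3 ≤ forcingNumber (prism n) M :=
    fun M hM => le_forcingNumber hM fun S hS => by
      obtain ⟨hSM, hS⟩ := (prism.isForcingSet_iff hn hM).mp hS
      have := prism.two_mul_add_one_le_three_mul_ncard hM hSM hS
      omega
  have hM₀ := prism.isPM_blockMatching hn prism.blockStart_not_add_one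
  have hS₀ : IsForcingSet (prism n) _ (prism.witnessForcingSet n) :=
    (prism.isForcingSet_iff hn hM₀).mpr
      ⟨prism.witnessForcingSet_subset hn, prism.meetsAltSquares_witness hn⟩
  have upper := (forcingNumber_le hS₀).trans prism.ncard_witnessForcingSet_le
  exact ⟨⟨_, hM₀, le_antisymm upper (lower _ hM₀)⟩, lower⟩
end

section
/- Let G be a finite graph with a perfect matching M, and let S ⊆ M. Then S is a forcing set of M if and only if the graph G − V(S) obtained by deleting all endpoints of edges of S contains no M-alternating cycle. -/
open SimpleGraph

variable {V : Type*}

lemma exists_two_mem {V : Type*} {G : SimpleGraph V} {e : Sym2 V} (he : e ∈ G.edgeSet) :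
    ∃ x y, G.Adj x y ∧ e = s(x, y) := by
  induction e using Sym2.ind with
  | _ a b => exact ⟨a, b, he, rfl⟩

lemma adj_of_mem_edge {V : Type*} {D : Set (Sym2 V)} {e : Sym2 V} (he : e ∈ D)
    {x y : V} (hx : x ∈ e) (hy : y ∈ e) (hxy : x ≠ y) : (fromEdgeSet D).Adj x y := by
  have : e = s(x, y) := (Sym2.mem_and_mem_iff hxy).mp ⟨hx, hy⟩
  exact (fromEdgeSet_adj _).mpr ⟨this ▸ he, hxy⟩

lemma reach_induce {V : Type*} {K K' : SimpleGraph V} {s : Set V}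
    (h : ∀ u ∈ s, ∀ w, K.Adj u w → K'.Adj u w ∧ w ∈ s)
    {u w : V} (p : K.Walk u w) (hu : u ∈ s) :
    ∃ hw : w ∈ s, (K'.induce s).Reachable ⟨u, hu⟩ ⟨w, hw⟩ := by
  induction p with
  | nil => exact ⟨hu, Reachable.refl _⟩
  | @cons u x w hadj p ih =>
    obtain ⟨h1, hx⟩ := h u hu x hadj
    obtain ⟨hw, r⟩ := ih hx
    exact ⟨hw, Reachable.trans
      (Adj.reachable (by simpa using h1 : (K'.induce s).Adj ⟨u, hu⟩ ⟨x, hx⟩)) r⟩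

lemma pair_other {α : Type*} {T : Set α} (h2 : T.ncard = 2) {e : α} (he : e ∈ T) :
    ∃ f, f ∈ T ∧ f ≠ e ∧ ∀ g ∈ T, g ≠ e → g = f := by
  obtain ⟨a, b, hab, rfl⟩ := Set.ncard_eq_two.mp h2
  simp only [Set.mem_insert_iff, Set.mem_singleton_iff] at he
  rcases he with rfl | rfl
  · refine ⟨b, Or.inr rfl, fun h => hab h.symm, ?_⟩
    rintro g (rfl | rfl) hg
    · exact absurd rfl hg
    · rfl
  · refine ⟨a, Or.inl rfl, hab, ?_⟩
    rintro g (rfl | rfl) hg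
    · rfl
    · exact absurd rfl hg

/-- `S ⊆ M` is a forcing set of `M` iff the graph obtained by deleting the
endpoints of `S` contains no `M`-alternating cycle. -/
theorem stmt_19 {V : Type*} [Fintype V] (G : SimpleGraph V) (M S : Set (Sym2 V))
    (hM : IsPM G M) (hS : S ⊆ M) :
    IsForcingSet G M S ↔
      ¬ ∃ C : Set (Sym2 V), IsAltCycle G M C ∧ Disjoint (edgeVerts C) (edgeVerts S) := by
  constructor
  · rintro ⟨hSM, hforce⟩ ⟨C, ⟨⟨hCE, ⟨e0, he0⟩, hdeg, hconn⟩, halt⟩, hdisj⟩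
    set M' : Set (Sym2 V) := (M \ C) ∪ (C \ M) with hM'def
    have hCdisj : ∀ e ∈ S, e ∉ C := by
      intro e heS heC
      obtain ⟨x, y, hxy, rfl⟩ := exists_two_mem (hCE heC)
      exact Set.disjoint_left.mp hdisj ⟨_, heC, Sym2.mem_mk_left x y⟩
        ⟨_, heS, Sym2.mem_mk_left x y⟩
    have hSM' : S ⊆ M' := fun e he => Or.inl ⟨hS he, hCdisj e he⟩
    have hPM' : IsPM G M' := by
      constructor
      · rintro e (⟨he, -⟩ | ⟨he, -⟩)
        · exact hM.1 he
        · exact hCE he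
      · intro v
        by_cases hv : v ∈ edgeVerts C
        · obtain ⟨e, ⟨heC, heM⟩, hve⟩ := halt v hv
          obtain ⟨f, hfT, hfe, huniq⟩ :=
            pair_other (hdeg v hv) (show e ∈ {g | g ∈ C ∧ v ∈ g} from ⟨heC, hve⟩)
          have hfM : f ∉ M := fun hfM => hfe ((hM.2 v).unique ⟨hfM, hfT.2⟩ ⟨heM, hve⟩)
          refine ⟨f, ⟨Or.inr ⟨hfT.1, hfM⟩, hfT.2⟩, ?_⟩
          rintro g ⟨(⟨hgM, hgC⟩ | ⟨hgC, hgM⟩), hvg⟩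
          · exact absurd (((hM.2 v).unique ⟨hgM, hvg⟩ ⟨heM, hve⟩) ▸ heC) hgC
          · exact huniq g ⟨hgC, hvg⟩ (fun h => hgM (h ▸ heM))
        · obtain ⟨e, ⟨heM, hve⟩, huniq⟩ := hM.2 v
          refine ⟨e, ⟨Or.inl ⟨heM, fun heC => hv ⟨e, heC, hve⟩⟩, hve⟩, ?_⟩
          rintro g ⟨(⟨hgM, -⟩ | ⟨hgC, -⟩), hvg⟩
          · exact huniq g ⟨hgM, hvg⟩
          · exact absurd ⟨g, hgC, hvg⟩ hv
    have heq : M' = M := hforce M' hPM' hSM'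
    by_cases h : e0 ∈ M
    · have h1 : e0 ∉ M' := by
        rintro (⟨-, hc⟩ | ⟨-, hm⟩)
        · exact hc he0
        · exact hm h
      exact h1 (heq ▸ h)
    · exact h (heq ▸ (Or.inr ⟨he0, h⟩ : e0 ∈ M'))
  · intro hno
    refine ⟨hS, fun M' hPM' hSM' => ?_⟩
    by_contra hne
    set D : Set (Sym2 V) := (M \ M') ∪ (M' \ M) with hDdef
    have hDE : D ⊆ G.edgeSet := by
      rintro e (⟨he, -⟩ | ⟨he, -⟩)
      · exact hM.1 he
      · exact hPM'.1 he
    have hDne : D.Nonempty := by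
      rw [Set.nonempty_iff_ne_empty]
      intro h
      rw [hDdef, Set.union_empty_iff] at h
      exact hne (Set.Subset.antisymm (Set.diff_eq_empty.mp h.2) (Set.diff_eq_empty.mp h.1))
    have hkey : ∀ v ∈ edgeVerts D, ∃ eM eM', eM ∈ M ∧ v ∈ eM ∧ eM' ∈ M' ∧ v ∈ eM' ∧
        eM ≠ eM' ∧ {e | e ∈ D ∧ v ∈ e} = {eM, eM'} := by
      rintro v ⟨g, hgD, hvg⟩
      obtain ⟨eM, ⟨heM, hveM⟩, huM⟩ := hM.2 v
      obtain ⟨eM', ⟨heM', hveM'⟩, huM'⟩ := hPM'.2 v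
      have hne2 : eM ≠ eM' := by
        intro h
        rcases hgD with ⟨hgM, hgn⟩ | ⟨hgM', hgn⟩
        · have : g = eM := huM g ⟨hgM, hvg⟩
          exact hgn (by rw [this, h]; exact heM')
        · have : g = eM' := huM' g ⟨hgM', hvg⟩
          exact hgn (by rw [this, ← h]; exact heM)
      refine ⟨eM, eM', heM, hveM, heM', hveM', hne2, ?_⟩
      ext e
      simp only [Set.mem_setOf_eq, Set.mem_insert_iff, Set.mem_singleton_iff]
      constructor
      · rintro ⟨(⟨h1, -⟩ | ⟨h1, -⟩), hve⟩
        · exact Or.inl (huM e ⟨h1, hve⟩)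
        · exact Or.inr (huM' e ⟨h1, hve⟩)
      · rintro (rfl | rfl)
        · exact ⟨Or.inl ⟨heM, fun hmem => hne2 (huM' e ⟨hmem, hveM⟩)⟩, hveM⟩
        · exact ⟨Or.inr ⟨heM', fun hmem => hne2 (huM e ⟨hmem, hveM'⟩).symm⟩, hveM'⟩
    obtain ⟨e0, he0⟩ := hDne
    obtain ⟨x0, y0, hxy0, he0eq⟩ := exists_two_mem (hDE he0)
    set H : SimpleGraph V := fromEdgeSet D with hHdef
    set C : Set (Sym2 V) := {e | e ∈ D ∧ ∀ x ∈ e, H.Reachable x0 x} with hCdef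
    have hvreach : ∀ v ∈ edgeVerts C, H.Reachable x0 v := by
      rintro v ⟨e, ⟨-, h⟩, hv⟩
      exact h v hv
    have hDC : ∀ e ∈ D, ∀ v ∈ e, H.Reachable x0 v → e ∈ C := by
      intro e heD v hve hr
      refine ⟨heD, fun y hy => ?_⟩
      by_cases hyv : y = v
      · exact hyv ▸ hr
      · exact hr.trans (adj_of_mem_edge heD hve hy (fun h => hyv h.symm)).reachable
    have hx0e0 : x0 ∈ e0 := by rw [he0eq]; exact Sym2.mem_mk_left x0 y0
    have he0C : e0 ∈ C := hDC e0 he0 x0 hx0e0 (Reachable.refl x0)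
    have hCE : C ⊆ G.edgeSet := fun e he => hDE he.1
    have hCD : edgeVerts C ⊆ edgeVerts D := by
      rintro v ⟨e, he, hv⟩
      exact ⟨e, he.1, hv⟩
    have hedges : ∀ v ∈ edgeVerts C, {e | e ∈ C ∧ v ∈ e} = {e | e ∈ D ∧ v ∈ e} := by
      intro v hv
      ext e
      constructor
      · rintro ⟨⟨heD, -⟩, hve⟩
        exact ⟨heD, hve⟩
      · rintro ⟨heD, hve⟩
        exact ⟨hDC e heD v hve (hvreach v hv), hve⟩
    refine hno ⟨C, ⟨⟨hCE, ⟨e0, he0C⟩, ?_, ?_⟩, ?_⟩, ?_⟩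
    · intro v hv
      rw [hedges v hv]
      obtain ⟨eM, eM', -, -, -, -, hne2, hset⟩ := hkey v (hCD hv)
      rw [hset]
      exact Set.ncard_pair hne2
    · have hclosed : ∀ u ∈ edgeVerts C, ∀ w, H.Adj u w →
          (fromEdgeSet C).Adj u w ∧ w ∈ edgeVerts C := by
        intro u hu w hadj
        obtain ⟨hD, hneq⟩ := (fromEdgeSet_adj _).mp hadj
        have hC : s(u, w) ∈ C := hDC _ hD u (Sym2.mem_mk_left u w) (hvreach u hu)
        exact ⟨(fromEdgeSet_adj _).mpr ⟨hC, hneq⟩, ⟨_, hC, Sym2.mem_mk_right u w⟩⟩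
      rw [connected_iff]
      refine ⟨?_, ⟨⟨x0, ⟨e0, he0C, hx0e0⟩⟩⟩⟩
      rintro ⟨u, hu⟩ ⟨w, hw⟩
      obtain ⟨p⟩ := (hvreach u hu).symm.trans (hvreach w hw)
      obtain ⟨hw2, r⟩ := reach_induce hclosed p hu
      exact r
    · intro v hv
      obtain ⟨eM, eM', heM, hveM, -, -, -, hset⟩ := hkey v (hCD hv)
      have heMD : eM ∈ D ∧ v ∈ eM := by
        rw [Set.ext_iff] at hset
        exact (hset eM).mpr (Or.inl rfl)
      exact ⟨eM, ⟨hDC eM heMD.1 v hveM (hvreach v hv), heM⟩, hveM⟩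
    · rw [Set.disjoint_left]
      rintro v hvC ⟨e', he'S, hve'⟩
      obtain ⟨eM, eM', heM, hveM, heM', hveM', hne2, -⟩ := hkey v (hCD hvC)
      have h1 : e' = eM := (hM.2 v).unique ⟨hS he'S, hve'⟩ ⟨heM, hveM⟩
      have h2 : e' = eM' := (hPM'.2 v).unique ⟨hSM' he'S, hve'⟩ ⟨heM', hveM'⟩
      exact hne2 (h1 ▸ h2)
end
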